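/- arXiv:math/0208217 — 5 statements merged into one kernel-verified Lean document; each statement's English description precedes it below -/
import Mathlib

section
/- Let R be a normal Noetherian domain and I an ideal of R. The Rees algebra R(I) = ⊕_{k≥0} I^k T^k ⊆ R[T] is a normal domain if and only if every power I^k is integrally closed in R. -/
open Polynomial

/-- An ideal `I` is integrally closed if every element of `R` that is integral over `I`
(i.e. satisfies an equation `x ^ n + a 1 * x ^ (n-1) + ⋯ + a n = 0` with `a i ∈ I ^ i`)
already lies in `I`. -/
def Ideal.IsIntClosed {R : Type*} [CommRing R] (I : Ideal R) : Prop :=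
  ∀ x : R, (∃ n : ℕ, 0 < n ∧ ∃ a : ℕ → R, (∀ i ∈ Finset.Icc 1 n, a i ∈ I ^ i) ∧
    x ^ n + ∑ i ∈ Finset.Icc 1 n, a i * x ^ (n - i) = 0) → x ∈ I

namespace ReesProof

variable {R T : Type*} [CommRing R] [CommRing T] [Algebra R T]

/-- image of `I ^ q` in `T`. -/
def W (I : Ideal R) (T : Type*) [CommRing T] [Algebra R T] (q : ℕ) : Submodule R T :=
  Submodule.map (Algebra.linearMap R T) (I ^ q)

lemma mem_W_iff {I : Ideal R} {q : ℕ} {x : T} :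
    x ∈ W I T q ↔ ∃ a ∈ I ^ q, algebraMap R T a = x := by
  simp [W, Submodule.mem_map, Algebra.linearMap_apply]

lemma algebraMap_mem_W {I : Ideal R} {q : ℕ} {a : R} (ha : a ∈ I ^ q) :
    algebraMap R T a ∈ W I T q := mem_W_iff.2 ⟨a, ha, rfl⟩

lemma one_mem_W {I : Ideal R} : (1 : T) ∈ W I T 0 := by
  refine mem_W_iff.2 ⟨1, ?_, map_one _⟩
  simp [Ideal.one_eq_top]

lemma mul_mem_W {I : Ideal R} {p q : ℕ} {x y : T}
    (hx : x ∈ W I T p) (hy : y ∈ W I T q) : x * y ∈ W I T (p + q) := by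
  obtain ⟨a, ha, rfl⟩ := mem_W_iff.1 hx
  obtain ⟨b, hb, rfl⟩ := mem_W_iff.1 hy
  refine mem_W_iff.2 ⟨a * b, ?_, map_mul _ _ _⟩
  rw [pow_add]
  exact Ideal.mul_mem_mul ha hb

lemma mul_algebraMap_mem_W {I : Ideal R} {q : ℕ} {x : T} (hx : x ∈ W I T q) (r : R) :
    x * algebraMap R T r ∈ W I T q := by
  obtain ⟨a, ha, rfl⟩ := mem_W_iff.1 hx
  exact mem_W_iff.2 ⟨a * r, Ideal.mul_mem_right r _ ha, map_mul _ _ _⟩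

/-- The Rees algebra of `I`, base changed to `T`: polynomials whose `q`-th coefficient lies in
the image of `I ^ q`. -/
def reesT (I : Ideal R) (T : Type*) [CommRing T] [Algebra R T] : Subalgebra R T[X] where
  carrier := { g | ∀ q, g.coeff q ∈ W I T q }
  mul_mem' := by
    intro f g hf hg q
    rw [coeff_mul]
    apply Submodule.sum_mem
    rintro ⟨i, j⟩ hij
    rw [← Finset.HasAntidiagonal.mem_antidiagonal.mp hij]
    exact mul_mem_W (hf i) (hg j)
  one_mem' := by
    intro q
    rw [coeff_one]
    split_ifs with h
    · subst h; exact one_mem_W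
    · exact Submodule.zero_mem _
  add_mem' := by
    intro f g hf hg q
    rw [coeff_add]; exact Submodule.add_mem _ (hf q) (hg q)
  zero_mem' := by intro q; simp only [coeff_zero]; exact Submodule.zero_mem _
  algebraMap_mem' := by
    intro r q
    rw [Polynomial.algebraMap_apply, coeff_C]
    split_ifs with h
    · subst h
      exact algebraMap_mem_W (by simp [Ideal.one_eq_top])
    · exact Submodule.zero_mem _


/-- `reesT` in the first of two variables, inside `(T[X])[X]`. -/
def reesT2 (I : Ideal R) (T : Type*) [CommRing T] [Algebra R T] : Subalgebra R (T[X])[X] where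
  carrier := { g | ∀ u, g.coeff u ∈ reesT I T }
  mul_mem' := by
    intro f g hf hg u
    rw [coeff_mul]
    apply Subalgebra.sum_mem
    rintro ⟨i, j⟩ hij
    exact mul_mem (hf i) (hg j)
  one_mem' := by
    intro u
    rw [coeff_one]
    split_ifs
    · exact one_mem _
    · exact zero_mem _
  add_mem' := by
    intro f g hf hg u
    rw [coeff_add]; exact add_mem (hf u) (hg u)
  zero_mem' := by intro u; simp only [coeff_zero]; exact zero_mem _
  algebraMap_mem' := by
    intro r u
    rw [Polynomial.algebraMap_apply, coeff_C]
    split_ifs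
    · exact Subalgebra.algebraMap_mem _ r
    · exact zero_mem _

/-- the map `T[X] → (T[X])[Y]`, `X ↦ X·Y^j`  (outer variable is `Y`). -/
noncomputable def psi (T : Type*) [CommRing T] (j : ℕ) : T[X] →+* (T[X])[X] :=
  eval₂RingHom ((C : T[X] →+* (T[X])[X]).comp (C : T →+* T[X])) (C X * X ^ j)

lemma monomial_mem_reesT {I : Ideal R} {q : ℕ} {t : T} (ht : t ∈ W I T q) :
    (monomial q t : T[X]) ∈ reesT I T := by
  intro p
  rw [coeff_monomial]
  split_ifs with h
  · subst h; exact ht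
  · exact Submodule.zero_mem _

lemma mem_reesT_iff {I : Ideal R} {g : T[X]} :
    g ∈ reesT I T ↔ ∀ q, g.coeff q ∈ W I T q := Iff.rfl

lemma psi_monomial (j q : ℕ) (t : T) :
    psi T j (monomial q t) = C (C t * X ^ q) * X ^ (j * q) := by
  simp only [psi, coe_eval₂RingHom, eval₂_monomial, RingHom.coe_comp, Function.comp_apply]
  rw [mul_pow, ← C_pow, ← pow_mul, map_mul]
  ring

lemma psi_mem {I : Ideal R} (j : ℕ) {g : T[X]} (hg : g ∈ reesT I T) :
    psi T j g ∈ reesT2 I T := by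
  rw [g.as_sum_support, map_sum]
  apply Subalgebra.sum_mem
  intro q hq
  rw [psi_monomial]
  intro u
  rw [C_mul_X_pow_eq_monomial, coeff_monomial]
  split_ifs with h
  · rw [C_mul_X_pow_eq_monomial]
    exact monomial_mem_reesT (hg q)
  · exact zero_mem _

/-- the map `R[Y] → (T[X])[Y]` with constant-in-`X` coefficients. -/
noncomputable def theta (R T : Type*) [CommRing R] [CommRing T] [Algebra R T] :
    R[X] →+* (T[X])[X] :=
  mapRingHom ((C : T →+* T[X]).comp (algebraMap R T))

lemma theta_coeff (r : R[X]) (u : ℕ) :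
    (theta R T r).coeff u = C (algebraMap R T (r.coeff u)) := coeff_map _ _

lemma theta_X : theta R T (X : R[X]) = X := map_X _

lemma theta_mem {I : Ideal R} (r : R[X]) : theta R T r ∈ reesT2 I T := by
  intro u
  rw [theta_coeff]
  intro p
  rw [coeff_C]
  split_ifs with h
  · subst h; exact algebraMap_mem_W (by simp [Ideal.one_eq_top])
  · exact Submodule.zero_mem _


lemma vandermonde_identity (f : T[X]) {k D : ℕ} (hD : f.natDegree < D + 1) (hk : k < D + 1) :
    ∑ j : Fin (D+1),
      theta R T ((Matrix.vandermonde fun q : Fin (D+1) => (X : R[X]) ^ (q:ℕ)).adjugate j ⟨k, hk⟩)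
        * psi T (j:ℕ) f
      = theta R T (Matrix.vandermonde fun q : Fin (D+1) => (X : R[X]) ^ (q:ℕ)).det
          * C (C (f.coeff k) * X ^ k) := by
  set M := Matrix.vandermonde fun q : Fin (D+1) => (X : R[X]) ^ (q:ℕ) with hM
  set kk : Fin (D+1) := ⟨k, hk⟩ with hkk
  have step1 : ∀ j : Fin (D+1),
      theta R T (M.adjugate j kk) * psi T (j:ℕ) f
        = ∑ q ∈ Finset.range (D+1),
            C (C (f.coeff q) * X ^ q) * theta R T ((X ^ q : R[X]) ^ (j:ℕ) * M.adjugate j kk) := by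
    intro j
    conv_lhs => rw [f.as_sum_range' (D+1) hD]
    rw [map_sum, Finset.mul_sum]
    refine Finset.sum_congr rfl fun q hq => ?_
    rw [psi_monomial]
    have hx : (X : (T[X])[X]) ^ ((j:ℕ) * q) = theta R T ((X ^ (q:ℕ)) ^ (j:ℕ)) := by
      rw [map_pow, map_pow, theta_X, ← pow_mul, Nat.mul_comm (j:ℕ) q]
    rw [hx]
    simp only [map_mul]
    ring
  rw [Finset.sum_congr rfl (fun j _ => step1 j), Finset.sum_comm]
  have step2 : ∀ q ∈ Finset.range (D+1),
      (∑ j : Fin (D+1),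
        C (C (f.coeff q) * X ^ q) * theta R T ((X ^ q : R[X]) ^ (j:ℕ) * M.adjugate j kk))
      = if q = k then C (C (f.coeff k) * X ^ k) * theta R T M.det else 0 := by
    intro q hq
    have hq' := Finset.mem_range.mp hq
    rw [← Finset.mul_sum, ← map_sum]
    have hsum : (∑ j : Fin (D+1), (X ^ q : R[X]) ^ (j:ℕ) * M.adjugate j kk)
        = (M * M.adjugate) ⟨q, hq'⟩ kk := by
      rw [Matrix.mul_apply]; rfl
    rw [hsum, Matrix.mul_adjugate, Matrix.smul_apply, Matrix.one_apply]
    by_cases h : q = k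
    · subst h
      rw [if_pos (show (⟨q, hq'⟩ : Fin (D+1)) = kk from rfl), if_pos rfl, smul_eq_mul, mul_one]
    · have : (⟨q, hq'⟩ : Fin (D+1)) ≠ kk := by
        simp [hkk, Fin.mk.injEq, h]
      rw [if_neg this, if_neg h]
      simp
  rw [Finset.sum_congr rfl step2, Finset.sum_ite_eq' (Finset.range (D+1)) k
    (fun _ => C (C (f.coeff k) * X ^ k) * theta R T M.det),
    if_pos (Finset.mem_range.mpr hk)]
  ring


/-- `psi` restricted as a map between the Rees subalgebras. -/
noncomputable def psiRes (I : Ideal R) (T : Type*) [CommRing T] [Algebra R T] (j : ℕ) :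
    ↥(reesT I T) →+* ↥(reesT2 I T) :=
  ((psi T j).comp (Subalgebra.val (reesT I T)).toRingHom).codRestrict
    (reesT2 I T).toSubring (fun s => psi_mem j s.2)

lemma isIntegral_psi {I : Ideal R} {f : T[X]} (hf : IsIntegral ↥(reesT I T) f) (j : ℕ) :
    IsIntegral ↥(reesT2 I T) (psi T j f) := by
  obtain ⟨P, hPm, hPe⟩ := hf
  refine ⟨P.map (psiRes I T j), hPm.map _, ?_⟩
  rw [eval₂_map]
  have hcomp : (algebraMap ↥(reesT2 I T) (T[X])[X]).comp (psiRes I T j)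
      = (psi T j).comp (algebraMap ↥(reesT I T) T[X]) := rfl
  rw [hcomp, ← hom_eval₂, hPe, map_zero]

lemma key (I : Ideal R) [Nontrivial R] [Nontrivial T] {f : T[X]}
    (hf : IsIntegral ↥(reesT I T) f) (k : ℕ) :
    ∃ m : ℕ, 0 < m ∧ ∃ c : ℕ → R, (∀ i ∈ Finset.Icc 1 m, c i ∈ I ^ (k * i)) ∧
      (f.coeff k) ^ m + ∑ i ∈ Finset.Icc 1 m,
        algebraMap R T (c i) * (f.coeff k) ^ (m - i) = 0 := by
  by_cases hzero : f.coeff k = 0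
  · refine ⟨1, one_pos, fun _ => 0, by simp, by simp [hzero]⟩
  set a := f.coeff k with ha
  have hk : k < f.natDegree + 1 := Nat.lt_succ_of_le (le_natDegree_of_ne_zero hzero)
  set D := f.natDegree with hD
  set M := Matrix.vandermonde fun q : Fin (D+1) => (X : R[X]) ^ (q:ℕ) with hM
  -- the determinant is monic
  have hMdet : M.det.Monic := by
    rw [hM, Matrix.det_vandermonde]
    apply monic_prod_of_monic
    intro i _
    apply monic_prod_of_monic
    intro j hj
    have hij : (i : ℕ) < (j : ℕ) := Fin.lt_iff_val_lt_val.mp (Finset.mem_Ioi.mp hj)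
    exact monic_X_pow_sub (by simpa [degree_X_pow] using (Nat.cast_lt (α := WithBot ℕ)).mpr hij)
  set δ := M.det.natDegree with hδ
  set z : (T[X])[X] := theta R T M.det * C (C a * X ^ k) with hz
  -- `z` is integral over the two-variable Rees algebra
  have hzint : IsIntegral ↥(reesT2 I T) z := by
    refine (mem_integralClosure_iff _ _).mp ?_
    rw [hz, ← vandermonde_identity f (Nat.lt_succ_of_le le_rfl) hk]
    apply Subalgebra.sum_mem
    intro j _
    apply Subalgebra.mul_mem
    · exact Subalgebra.algebraMap_mem (integralClosure ↥(reesT2 I T) ((T[X])[X]))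
        ⟨theta R T (M.adjugate j ⟨k, hk⟩), theta_mem _⟩
    · exact mem_integralClosure_iff _ _ |>.mpr (isIntegral_psi hf (j:ℕ))
  obtain ⟨Q, hQm, hQe⟩ := hzint
  set m := Q.natDegree with hm
  have hmpos : 0 < m := by
    rcases Nat.eq_zero_or_pos m with h0 | h
    · exfalso
      rw [hQm.natDegree_eq_zero.mp h0] at hQe
      simp at hQe
    · exact h
  -- powers of z
  have hzpow : ∀ u : ℕ, z ^ u = theta R T (M.det ^ u) * C (C (a ^ u) * X ^ (k * u)) := by
    intro u
    rw [hz, mul_pow, ← map_pow]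
    congr 1
    rw [← map_pow, mul_pow, ← C_pow, ← pow_mul]
  -- coefficient extraction
  have extract : ∀ (β : (T[X])[X]), β ∈ reesT2 I T → ∀ u, u ≤ m →
      (((β * z ^ u).coeff (δ * m)).coeff (k * m))
        = ((β * theta R T (M.det ^ u)).coeff (δ * m)).coeff (k * (m - u)) * a ^ u ∧
      ((β * theta R T (M.det ^ u)).coeff (δ * m)).coeff (k * (m - u)) ∈ W I T (k * (m - u)) := by
    intro β hβ u hu
    constructor
    · rw [hzpow u]
      have e1 : β * (theta R T (M.det ^ u) * C (C (a ^ u) * X ^ (k * u)))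
          = (β * theta R T (M.det ^ u)) * C (C (a ^ u) * X ^ (k * u)) := by ring
      rw [e1, coeff_mul_C]
      have e2 : ((β * theta R T (M.det ^ u)).coeff (δ * m)) * (C (a ^ u) * X ^ (k * u))
          = (((β * theta R T (M.det ^ u)).coeff (δ * m)) * C (a ^ u)) * X ^ (k * u) := by ring
      rw [e2, coeff_mul_X_pow', if_pos (Nat.mul_le_mul_left k hu), coeff_mul_C]
      congr 2
      exact (Nat.mul_sub k m u).symm
    · rw [coeff_mul, finset_sum_coeff]
      apply Submodule.sum_mem
      rintro ⟨u1, u2⟩ hu12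
      rw [theta_coeff, coeff_mul_C]
      exact mul_algebraMap_mem_W (hβ u1 (k * (m - u))) _
  rw [eval₂_eq_sum_range] at hQe
  -- apply the coefficient-of-`X^(k*m) Y^(δ*m)` additive map to the equation
  have hE := congrArg (fun g : (T[X])[X] => (g.coeff (δ * m)).coeff (k * m)) hQe
  simp only [finset_sum_coeff, coeff_zero] at hE
  set e : ℕ → T := fun u =>
    (((algebraMap ↥(reesT2 I T) ((T[X])[X]) (Q.coeff u)) * theta R T (M.det ^ u)).coeff
      (δ * m)).coeff (k * (m - u)) with he
  have hβmem : ∀ u : ℕ, (algebraMap ↥(reesT2 I T) ((T[X])[X]) (Q.coeff u)) ∈ reesT2 I T :=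
    fun u => (Q.coeff u).2
  have hmem : ∀ u, u ≤ m → e u ∈ W I T (k * (m - u)) :=
    fun u hu => (extract _ (hβmem u) u hu).2
  have hterm : ∀ u, u ≤ m →
      (((algebraMap ↥(reesT2 I T) ((T[X])[X]) (Q.coeff u)) * z ^ u).coeff (δ * m)).coeff (k * m)
        = e u * a ^ u :=
    fun u hu => (extract _ (hβmem u) u hu).1
  rw [Finset.sum_range_succ] at hE
  have hQtop : (algebraMap ↥(reesT2 I T) ((T[X])[X]) (Q.coeff m)) = 1 := by
    have := hQm.coeff_natDegree
    rw [← hm] at this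
    rw [this, map_one]
  have hetop : e m = 1 := by
    rw [he]
    simp only
    rw [hQtop, one_mul, theta_coeff]
    have h2 : (M.det ^ m).coeff (δ * m) = 1 := by
      have h3 := (hMdet.pow m).coeff_natDegree
      rwa [hMdet.natDegree_pow, Nat.mul_comm] at h3
    rw [h2, map_one, map_one, Nat.sub_self, Nat.mul_zero, coeff_one, if_pos rfl]
  have htop : (((algebraMap ↥(reesT2 I T) ((T[X])[X]) (Q.coeff m)) * z ^ m).coeff
      (δ * m)).coeff (k * m) = a ^ m := by
    rw [hterm m le_rfl, hetop, one_mul]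
  rw [htop] at hE
  rw [Finset.sum_congr rfl (fun u hu => hterm u (le_of_lt (Finset.mem_range.mp hu)))] at hE
  -- choose preimages in `R`
  have hchoice : ∀ i : ℕ, ∃ cR : R, i ∈ Finset.Icc 1 m →
      (cR ∈ I ^ (k * i) ∧ algebraMap R T cR = e (m - i)) := by
    intro i
    by_cases hi : i ∈ Finset.Icc 1 m
    · obtain ⟨h1, h2⟩ := Finset.mem_Icc.mp hi
      have hW : e (m - i) ∈ W I T (k * i) := by
        have := hmem (m - i) (Nat.sub_le m i)
        rwa [Nat.sub_sub_self h2] at this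
      obtain ⟨cR, hc1, hc2⟩ := mem_W_iff.1 hW
      exact ⟨cR, fun _ => ⟨hc1, hc2⟩⟩
    · exact ⟨0, fun h => absurd h hi⟩
  choose c hc using hchoice
  refine ⟨m, hmpos, c, fun i hi => (hc i hi).1, ?_⟩
  have hre : ∑ i ∈ Finset.Icc 1 m, algebraMap R T (c i) * a ^ (m - i)
      = ∑ u ∈ Finset.range m, e u * a ^ u := by
    refine Finset.sum_nbij' (fun i => m - i) (fun u => m - u) ?_ ?_ ?_ ?_ ?_ <;>
      intro i hi <;>
      simp only [Finset.mem_Icc, Finset.mem_range] at hi ⊢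
    · omega
    · omega
    · omega
    · omega
    · rw [(hc i (Finset.mem_Icc.mpr hi)).2]
  rw [hre]
  rw [add_comm]
  exact hE


lemma monic_shape {A : Type*} [CommRing A] [Nontrivial A] {n : ℕ} (hn : 0 < n) (d : ℕ → A) :
    (X ^ n + ∑ i ∈ Finset.Icc 1 n, C (d i) * X ^ (n - i)).Monic := by
  apply monic_X_pow_add
  apply lt_of_le_of_lt (degree_sum_le _ _)
  rw [Finset.sup_lt_iff (by exact_mod_cast WithBot.bot_lt_coe n)]
  intro i hi
  apply lt_of_le_of_lt (degree_C_mul_X_pow_le _ _)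
  exact_mod_cast Nat.sub_lt hn (Finset.mem_Icc.mp hi).1

lemma eval_shape {A B : Type*} [CommRing A] [CommRing B] (φ : A →+* B) (x : B) (n : ℕ)
    (d : ℕ → A) :
    eval₂ φ x (X ^ n + ∑ i ∈ Finset.Icc 1 n, C (d i) * X ^ (n - i))
      = x ^ n + ∑ i ∈ Finset.Icc 1 n, φ (d i) * x ^ (n - i) := by
  simp [eval₂_finset_sum]

lemma map_mem_reesT {I : Ideal R} {s : R[X]} (hs : s ∈ reesAlgebra I) :
    s.map (algebraMap R T) ∈ reesT I T := by
  intro q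
  rw [coeff_map]
  exact algebraMap_mem_W (hs q)

lemma smul_mem_reesAlgebra {I : Ideal R} {a : R} (ha : a ∈ I) (g : R[X]) {N : ℕ}
    (hN : g.natDegree ≤ N) : C (a ^ N) * g ∈ reesAlgebra I := by
  intro i
  rw [coeff_C_mul]
  by_cases hi : i ≤ N
  · exact Ideal.mul_mem_right _ _ (Ideal.pow_le_pow_right hi (Ideal.pow_mem_pow ha N))
  · rw [coeff_eq_zero_of_natDegree_lt (by omega), mul_zero]
    exact zero_mem _

lemma pow_shift_eq {x : R} {n : ℕ} (k : ℕ) (aa : ℕ → R)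
    (heq : x ^ n + ∑ i ∈ Finset.Icc 1 n, aa i * x ^ (n - i) = 0) :
    (C x * X ^ k) ^ n + ∑ i ∈ Finset.Icc 1 n,
      (C (aa i) * X ^ (k * i)) * (C x * X ^ k) ^ (n - i) = (0 : R[X]) := by
  have hterm : ∀ i ∈ Finset.Icc 1 n,
      (C (aa i) * X ^ (k * i)) * (C x * X ^ k) ^ (n - i)
        = C (aa i * x ^ (n - i)) * X ^ (k * n) := by
    intro i hi
    obtain ⟨h1, h2⟩ := Finset.mem_Icc.mp hi
    rw [mul_pow, ← C_pow, ← pow_mul, map_mul]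
    have hexp : k * i + k * (n - i) = k * n := by
      rw [← Nat.mul_add]
      congr 1
      omega
    calc C (aa i) * X ^ (k * i) * (C (x ^ (n - i)) * X ^ (k * (n - i)))
        = C (aa i) * C (x ^ (n - i)) * X ^ (k * i + k * (n - i)) := by ring
      _ = C (aa i) * C (x ^ (n - i)) * X ^ (k * n) := by rw [hexp]
  rw [Finset.sum_congr rfl hterm, mul_pow, ← C_pow, ← pow_mul, ← Finset.sum_mul, ← add_mul,
    ← map_sum, ← map_add, heq, map_zero, zero_mul]


lemma const_of_mem_rees_bot {g : R[X]} (hg : g ∈ reesAlgebra (⊥ : Ideal R)) :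
    g = C (g.coeff 0) := by
  ext i
  cases i with
  | zero => simp
  | succ j =>
    rw [coeff_C, if_neg (Nat.succ_ne_zero j)]
    have := hg (j + 1)
    have hbot : (⊥ : Ideal R) ^ (j + 1) ≤ ⊥ := Ideal.pow_le_self (Nat.succ_ne_zero j)
    simpa using hbot this

/-- the "evaluate at 0" ring hom out of the Rees algebra of `⊥`. -/
def evalBot : ↥(reesAlgebra (⊥ : Ideal R)) →+* R where
  toFun s := (s : R[X]).coeff 0
  map_one' := by simp
  map_mul' s t := by
    show ((s * t : ↥(reesAlgebra (⊥ : Ideal R))) : R[X]).coeff 0 = _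
    rw [Subalgebra.coe_mul, mul_coeff_zero]
  map_zero' := by simp
  map_add' s t := by
    show ((s + t : ↥(reesAlgebra (⊥ : Ideal R))) : R[X]).coeff 0 = _
    rw [Subalgebra.coe_add, coeff_add]

lemma bot_case [IsDomain R] [IsIntegrallyClosed R] :
    IsIntegrallyClosed ↥(reesAlgebra (⊥ : Ideal R)) := by
  set S0 := reesAlgebra (⊥ : Ideal R) with hS0
  letI : Algebra ↥S0 (FractionRing R) :=
    ((algebraMap R (FractionRing R)).comp (evalBot (R := R))).toAlgebra
  have halg : ∀ s : ↥S0, algebraMap ↥S0 (FractionRing R) s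
      = algebraMap R (FractionRing R) ((s : R[X]).coeff 0) := fun s => rfl
  haveI : IsFractionRing ↥S0 (FractionRing R) := by
    constructor
    constructor
    · rintro ⟨y, hy⟩
      rw [halg]
      have hyne : (y : ↥S0) ≠ 0 := nonZeroDivisors.ne_zero hy
      have hc : (y : R[X]).coeff 0 ≠ 0 := by
        intro h0
        apply hyne
        apply Subtype.ext
        have := const_of_mem_rees_bot y.2
        rw [this, h0, map_zero]
        rfl
      exact (isUnit_iff_ne_zero).mpr
        ((map_ne_zero_iff _ (IsFractionRing.injective R (FractionRing R))).mpr hc)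
    · intro z
      obtain ⟨⟨r, s⟩, hrs⟩ := IsLocalization.surj (nonZeroDivisors R) z
      have hsne : (s : R) ≠ 0 := nonZeroDivisors.ne_zero s.2
      refine ⟨⟨⟨C r, Subalgebra.algebraMap_mem _ r⟩, ⟨⟨C (s : R), Subalgebra.algebraMap_mem _ _⟩,
        mem_nonZeroDivisors_of_ne_zero ?_⟩⟩, ?_⟩
      · intro h0
        apply hsne
        have := congrArg (fun g : ↥S0 => (g : R[X]).coeff 0) h0
        simp at this
      · rw [halg, halg]
        simpa using hrs
    · intro x y h
      rw [halg, halg] at h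
      refine ⟨1, ?_⟩
      have h2 := IsFractionRing.injective R (FractionRing R) h
      have hx := const_of_mem_rees_bot x.2
      have hy := const_of_mem_rees_bot y.2
      have : (x : R[X]) = (y : R[X]) := by rw [hx, hy, h2]
      simp [Subtype.ext this]
  refine (isIntegrallyClosed_iff (FractionRing R)).mpr ?_
  intro x hx
  obtain ⟨P, hPm, hPe⟩ := hx
  have hint : IsIntegral R x := by
    refine ⟨P.map (evalBot (R := R)), hPm.map _, ?_⟩
    rw [eval₂_map]
    have : (algebraMap R (FractionRing R)).comp (evalBot (R := R))
        = algebraMap ↥S0 (FractionRing R) := rfl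
    rw [this, hPe]
  obtain ⟨y, hy⟩ := IsIntegrallyClosed.isIntegral_iff.mp hint
  refine ⟨⟨C y, Subalgebra.algebraMap_mem _ y⟩, ?_⟩
  rw [halg]
  simpa using hy

end ReesProof

set_option maxHeartbeats 2000000 in
open ReesProof in
/-- For a normal Noetherian domain `R` and an ideal `I`, the Rees algebra
`⊕ I^k T^k ⊆ R[T]` is a normal domain iff every power `I ^ k` is integrally closed. -/
theorem rees_normal_iff_powers_integrally_closed
    {R : Type*} [CommRing R] [IsDomain R] [IsNoetherianRing R] [IsIntegrallyClosed R]
    (I : Ideal R) :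
    IsIntegrallyClosed ↥(reesAlgebra I) ↔ ∀ k : ℕ, (I ^ k).IsIntClosed := by
  by_cases hbot : I = ⊥
  · subst hbot
    constructor
    · intro _ k x hx
      obtain ⟨n, hn, aa, haa, heq⟩ := hx
      rcases Nat.eq_zero_or_pos k with hk | hk
      · subst hk
        simp only [pow_zero, Ideal.one_eq_top]
        trivial
      · have hbk : (⊥ : Ideal R) ^ k = ⊥ :=
          le_antisymm (Ideal.pow_le_self hk.ne') bot_le
        rw [hbk]
        have hz : ∀ i ∈ Finset.Icc 1 n, aa i * x ^ (n - i) = 0 := by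
          intro i hi
          obtain ⟨h1, _⟩ := Finset.mem_Icc.mp hi
          have h2 := haa i hi
          rw [hbk] at h2
          have h3 : (⊥ : Ideal R) ^ i ≤ ⊥ := Ideal.pow_le_self (by omega)
          have : aa i = 0 := by simpa using h3 h2
          rw [this, zero_mul]
        rw [Finset.sum_eq_zero hz, add_zero] at heq
        have : x = 0 := pow_eq_zero_iff hn.ne' |>.mp heq
        simp [this]
    · intro _
      exact bot_case
  · -- main case : I ≠ ⊥
    obtain ⟨a, haI, ha0⟩ := (Submodule.ne_bot_iff I).mp hbot
    set K := FractionRing R with hK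
    set L := FractionRing R[X] with hLdef
    set S := reesAlgebra I with hSdef
    letI : Algebra R[X] K[X] := (mapRingHom (algebraMap R K)).toAlgebra
    have halgKX : ∀ p : R[X], algebraMap R[X] K[X] p = p.map (algebraMap R K) := fun _ => rfl
    set M0 : Submonoid R[X] := Submonoid.map (C : R →+* R[X]) (nonZeroDivisors R) with hM0
    haveI hloc : IsLocalization M0 K[X] := by
      constructor
      constructor
      · rintro ⟨y, hy⟩
        obtain ⟨s, hs, rfl⟩ := hy
        rw [halgKX, map_C]
        exact isUnit_C.mpr (isUnit_iff_ne_zero.mpr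
          ((map_ne_zero_iff _ (IsFractionRing.injective R K)).mpr (nonZeroDivisors.ne_zero hs)))
      · intro z
        obtain ⟨b, hb⟩ := IsLocalization.integerNormalization_map_to_map (nonZeroDivisors R) z
        refine ⟨⟨IsLocalization.integerNormalization (nonZeroDivisors R) z,
          ⟨C (b : R), Submonoid.mem_map.mpr ⟨(b : R), b.2, rfl⟩⟩⟩, ?_⟩
        rw [halgKX, halgKX, map_C, hb, Algebra.smul_def, Polynomial.algebraMap_apply]
        ring
      · intro x y h
        rw [halgKX, halgKX] at h
        exact ⟨1, by rw [Polynomial.map_injective _ (IsFractionRing.injective R K) h]⟩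
    have hU : ∀ y : M0, IsUnit (algebraMap R[X] L (y : R[X])) := by
      rintro ⟨y, hy⟩
      obtain ⟨s, hs, rfl⟩ := hy
      have hne : (C s : R[X]) ≠ 0 := fun h =>
        nonZeroDivisors.ne_zero hs (by simpa using congrArg (fun p : R[X] => p.coeff 0) h)
      exact isUnit_iff_ne_zero.mpr
        ((map_ne_zero_iff _ (IsFractionRing.injective R[X] L)).mpr hne)
    letI : Algebra K[X] L := (IsLocalization.lift hU).toAlgebra
    haveI : IsScalarTower R[X] K[X] L :=
      IsScalarTower.of_algebraMap_eq' (IsLocalization.lift_comp hU).symm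
    haveI : IsFractionRing K[X] L :=
      IsFractionRing.isFractionRing_of_isDomain_of_isLocalization M0 K[X] L
    letI : Algebra ↥S L := ((algebraMap R[X] L).comp (algebraMap ↥S R[X])).toAlgebra
    have halgSL : ∀ s : ↥S, algebraMap ↥S L s = algebraMap R[X] L (s : R[X]) := fun _ => rfl
    haveI : IsFractionRing ↥S L := by
      constructor
      constructor
      · rintro ⟨y, hy⟩
        have h1 : (y : ↥S) ≠ 0 := nonZeroDivisors.ne_zero hy
        have h2 : ((y : ↥S) : R[X]) ≠ 0 := fun h => h1 (Subtype.ext h)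
        rw [halgSL]
        exact isUnit_iff_ne_zero.mpr
          ((map_ne_zero_iff _ (IsFractionRing.injective R[X] L)).mpr h2)
      · intro z
        obtain ⟨⟨p, q⟩, h⟩ := IsLocalization.surj (nonZeroDivisors R[X]) z
        have hqne : (q : R[X]) ≠ 0 := nonZeroDivisors.ne_zero q.2
        have hCne : (C (a ^ (max p.natDegree (q : R[X]).natDegree)) : R[X]) ≠ 0 := by
          have := pow_ne_zero (max p.natDegree (q : R[X]).natDegree) ha0
          simpa using this
        refine ⟨⟨⟨C (a ^ (max p.natDegree (q : R[X]).natDegree)) * p,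
            smul_mem_reesAlgebra haI p (le_max_left _ _)⟩,
          ⟨⟨C (a ^ (max p.natDegree (q : R[X]).natDegree)) * (q : R[X]),
            smul_mem_reesAlgebra haI _ (le_max_right _ _)⟩,
           mem_nonZeroDivisors_of_ne_zero (fun h0 => mul_ne_zero hCne hqne
             (by simpa using congrArg (fun s : ↥S => (s : R[X])) h0))⟩⟩, ?_⟩
        rw [halgSL, halgSL]
        show z * algebraMap R[X] L (C _ * (q : R[X])) = algebraMap R[X] L (C _ * p)
        rw [map_mul, map_mul,
          show z * (algebraMap R[X] L (C (a ^ (max p.natDegree (q : R[X]).natDegree)))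
              * algebraMap R[X] L (q : R[X]))
            = (z * algebraMap R[X] L (q : R[X]))
              * algebraMap R[X] L (C (a ^ (max p.natDegree (q : R[X]).natDegree))) from by ring,
          h, mul_comm]
      · intro x y h
        rw [halgSL, halgSL] at h
        exact ⟨1, by rw [Subtype.ext (IsFractionRing.injective R[X] L h)]⟩
    constructor
    · -- Rees algebra integrally closed → all powers integrally closed
      intro hIC k x hx
      haveI := hIC
      obtain ⟨n, hn, aa, haa, heq⟩ := hx
      set d : ℕ → ↥S := fun i =>
        if hi : i ∈ Finset.Icc 1 n then
          ⟨C (aa i) * X ^ (k * i), by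
            rw [C_mul_X_pow_eq_monomial]
            exact reesAlgebra.monomial_mem.mpr (by rw [pow_mul]; exact haa i hi)⟩
        else 0 with hd
      set u : L := algebraMap R[X] L (C x * X ^ k) with hu
      have hint : IsIntegral ↥S u := by
        refine ⟨X ^ n + ∑ i ∈ Finset.Icc 1 n, C (d i) * X ^ (n - i), monic_shape hn d, ?_⟩
        rw [eval_shape]
        have hval : u ^ n + ∑ i ∈ Finset.Icc 1 n, algebraMap ↥S L (d i) * u ^ (n - i)
            = algebraMap R[X] L ((C x * X ^ k) ^ n + ∑ i ∈ Finset.Icc 1 n,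
                (C (aa i) * X ^ (k * i)) * (C x * X ^ k) ^ (n - i)) := by
          rw [map_add, map_pow, map_sum]
          congr 1
          refine Finset.sum_congr rfl fun i hi => ?_
          rw [map_mul, map_pow, halgSL]
          congr 2
          rw [hd]
          simp only [dif_pos hi]
        rw [hval, pow_shift_eq k aa heq, map_zero]
      obtain ⟨s, hs⟩ := IsIntegrallyClosed.isIntegral_iff.mp hint
      have hsval : (s : R[X]) = C x * X ^ k :=
        IsFractionRing.injective R[X] L (by rw [← halgSL, hs])
      have hmem := s.2 k
      rw [hsval, C_mul_X_pow_eq_monomial, coeff_monomial, if_pos rfl] at hmem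
      exact hmem
    · -- all powers integrally closed → Rees algebra integrally closed
      intro hcl
      refine (isIntegrallyClosed_iff L).mpr ?_
      intro z hz
      have hz1 : IsIntegral R[X] z := by
        obtain ⟨P, hPm, hPe⟩ := hz
        refine ⟨P.map (algebraMap ↥S R[X]), hPm.map _, ?_⟩
        rw [eval₂_map]
        exact hPe
      have hz2 : IsIntegral K[X] z := IsIntegral.tower_top hz1
      obtain ⟨g, hg⟩ := IsIntegrallyClosed.isIntegral_iff.mp hz2
      set ρ : ↥S →+* ↥(reesT I K) :=
        ((mapRingHom (algebraMap R K)).comp (algebraMap ↥S R[X])).codRestrict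
          (reesT I K).toSubring (fun s => map_mem_reesT s.2) with hρ
      have hgint : IsIntegral ↥(reesT I K) g := by
        obtain ⟨P, hPm, hPe⟩ := hz
        refine ⟨P.map ρ, hPm.map _, ?_⟩
        apply IsFractionRing.injective K[X] L
        rw [map_zero]
        have h1 : (algebraMap K[X] L) (eval₂ (algebraMap ↥(reesT I K) K[X]) g (P.map ρ))
            = eval₂ (algebraMap ↥S L) z P := by
          rw [eval₂_map, hom_eval₂, hg]
          congr 1
          ext s
          show algebraMap K[X] L (algebraMap R[X] K[X] (s : R[X])) = algebraMap ↥S L s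
          rw [← IsScalarTower.algebraMap_apply, halgSL]
        rw [h1, hPe]
      have hcoeff : ∀ k : ℕ, ∃ xk : R, xk ∈ I ^ k ∧ algebraMap R K xk = g.coeff k := by
        intro k
        obtain ⟨m, hm, c, hcmem, hceq⟩ := key I hgint k
        have hintk : IsIntegral R (g.coeff k) := by
          refine ⟨X ^ m + ∑ i ∈ Finset.Icc 1 m, C (c i) * X ^ (m - i),
            monic_shape hm c, ?_⟩
          rw [eval_shape]
          exact hceq
        obtain ⟨xk, hxk⟩ := IsIntegrallyClosed.isIntegral_iff.mp hintk
        refine ⟨xk, ?_, hxk⟩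
        apply hcl k
        refine ⟨m, hm, c, fun i hi => by rw [← pow_mul]; exact hcmem i hi, ?_⟩
        apply IsFractionRing.injective R K
        rw [map_zero, map_add, map_pow, map_sum]
        rw [hxk]
        calc (g.coeff k) ^ m + ∑ i ∈ Finset.Icc 1 m,
              algebraMap R K (c i * xk ^ (m - i))
            = (g.coeff k) ^ m + ∑ i ∈ Finset.Icc 1 m,
              algebraMap R K (c i) * (g.coeff k) ^ (m - i) := by
              congr 1
              refine Finset.sum_congr rfl fun i hi => ?_
              rw [map_mul, map_pow, hxk]
          _ = 0 := hceq
      choose xx hxx using hcoeff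
      set f' : R[X] := ∑ q ∈ Finset.range (g.natDegree + 1), monomial q (xx q) with hf'
      have hf'mem : f' ∈ S := by
        apply sum_mem
        intro q _
        exact reesAlgebra.monomial_mem.mpr (hxx q).1
      have hmap : f'.map (algebraMap R K) = g := by
        rw [hf', Polynomial.map_sum]
        conv_rhs => rw [g.as_sum_range' (g.natDegree + 1) (Nat.lt_succ_self _)]
        refine Finset.sum_congr rfl fun q _ => ?_
        rw [map_monomial, (hxx q).2]
      refine ⟨⟨f', hf'mem⟩, ?_⟩
      rw [halgSL]
      show algebraMap R[X] L f' = z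
      rw [IsScalarTower.algebraMap_apply R[X] K[X] L, halgKX, hmap, hg]
end

section
/- Let R be a normal Noetherian domain, I an ideal of height at least 2 whose Rees algebra 𝓡 = R(I) is normal, and let x ∈ I be a nonzero element. If P is a height-one prime ideal of 𝓡 not containing I𝓡, then the localization 𝓡_P equals R[T]_Q for some height-one prime Q of R[T]; in particular 𝓡_P is a localization of R[T]. -/
open Polynomial

/-- The localization of (the image of) a ring `A` at a prime `P`, viewed as a subset of a
larger ring `L` via a ring homomorphism `f : A →+* L`:  the set of `x ∈ L` with
`x * f b = f a` for some `a b : A`, `b ∉ P`. -/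
def locSet {A L : Type*} [CommRing A] [CommRing L] (f : A →+* L) (P : Ideal A) : Set L :=
  {x | ∃ a b : A, b ∉ P ∧ x * f b = f a}

section Aux

variable {R : Type*} [CommRing R] {I : Ideal R}

/-- `C y` is in the Rees algebra. -/
lemma C_mem_rees (y : R) : C y ∈ reesAlgebra I := by
  rw [mem_reesAlgebra_iff]
  intro i
  rcases Nat.eq_zero_or_pos i with h | h
  · subst h; simp
  · simp [coeff_C, Nat.pos_iff_ne_zero.mp h]

lemma pow_C_mul_mem_rees {y : R} (hy : y ∈ I) (f : R[X]) {n : ℕ}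
    (hn : f.natDegree ≤ n) : C y ^ n * f ∈ reesAlgebra I := by
  rw [mem_reesAlgebra_iff]
  intro i
  rw [← C_pow, coeff_C_mul]
  rcases le_or_gt i n with h | h
  · exact Ideal.pow_le_pow_right h (Ideal.mul_mem_right _ _ (Ideal.pow_mem_pow hy n))
  · rw [coeff_eq_zero_of_natDegree_lt (lt_of_le_of_lt hn h), mul_zero]
    exact zero_mem _

end Aux

section Sat

variable {R : Type*} [CommRing R] {I : Ideal R} {y : R} (hy : y ∈ I)

/-- The saturation of an ideal `q` of the Rees algebra with respect to powers of `C y`,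
as an ideal of `R[X]`. -/
def satId (hy : y ∈ I) (q : Ideal (reesAlgebra I)) : Ideal R[X] where
  carrier := {f | ∃ g ∈ q, ∃ n : ℕ, C y ^ n * f = (g : R[X])}
  zero_mem' := ⟨0, zero_mem q, 0, by simp⟩
  add_mem' := by
    rintro f₁ f₂ ⟨g₁, hg₁, n₁, h₁⟩ ⟨g₂, hg₂, n₂, h₂⟩
    refine ⟨⟨C y ^ n₂, by simpa using pow_C_mul_mem_rees hy 1 (by simp)⟩ * g₁ +
      ⟨C y ^ n₁, by simpa using pow_C_mul_mem_rees hy 1 (by simp)⟩ * g₂,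
      add_mem (Ideal.mul_mem_left _ _ hg₁) (Ideal.mul_mem_left _ _ hg₂), n₁ + n₂, ?_⟩
    push_cast
    rw [← h₁, ← h₂]
    ring
  smul_mem' := by
    rintro r f ⟨g, hg, n, h⟩
    refine ⟨⟨C y ^ r.natDegree * r, pow_C_mul_mem_rees hy r le_rfl⟩ * g,
      Ideal.mul_mem_left _ _ hg, n + r.natDegree, ?_⟩
    push_cast
    rw [← h]
    simp only [smul_eq_mul]
    ring

lemma coe_mem_satId_iff {q : Ideal (reesAlgebra I)} (hq : q.IsPrime)
    (hcq : (⟨C y, C_mem_rees y⟩ : reesAlgebra I) ∉ q) (g : reesAlgebra I) :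
    (g : R[X]) ∈ satId hy q ↔ g ∈ q := by
  constructor
  · rintro ⟨g', hg', n, h⟩
    have : (⟨C y, C_mem_rees y⟩ : reesAlgebra I) ^ n * g = g' := by
      apply Subtype.ext
      push_cast
      exact h
    rw [← this] at hg'
    rcases hq.mem_or_mem hg' with h' | h'
    · exact absurd (hq.mem_of_pow_mem _ h') hcq
    · exact h'
  · intro h
    exact ⟨g, h, 0, by simp⟩

lemma satId_isPrime {q : Ideal (reesAlgebra I)} (hq : q.IsPrime)
    (hcq : (⟨C y, C_mem_rees y⟩ : reesAlgebra I) ∉ q) : (satId hy q).IsPrime := by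
  constructor
  · intro h
    rw [Ideal.eq_top_iff_one] at h
    obtain ⟨g, hg, n, hn⟩ := h
    rw [mul_one] at hn
    have : (⟨C y, C_mem_rees y⟩ : reesAlgebra I) ^ n = g := by apply Subtype.ext; push_cast; exact hn
    rw [← this] at hg
    exact hcq (hq.mem_of_pow_mem _ hg)
  · rintro f₁ f₂ ⟨g, hg, n, h⟩
    set g₁ : reesAlgebra I := ⟨C y ^ f₁.natDegree * f₁, pow_C_mul_mem_rees hy f₁ le_rfl⟩
    set g₂ : reesAlgebra I := ⟨C y ^ f₂.natDegree * f₂, pow_C_mul_mem_rees hy f₂ le_rfl⟩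
    have key : (⟨C y, C_mem_rees y⟩ : reesAlgebra I) ^ (f₁.natDegree + f₂.natDegree) * g =
        (⟨C y, C_mem_rees y⟩ : reesAlgebra I) ^ n * (g₁ * g₂) := by
      apply Subtype.ext
      push_cast [g₁, g₂]
      rw [← h]
      ring
    have hmem : (⟨C y, C_mem_rees y⟩ : reesAlgebra I) ^ n * (g₁ * g₂) ∈ q := by
      rw [← key]; exact Ideal.mul_mem_left _ _ hg
    rcases hq.mem_or_mem hmem with h' | h'
    · exact absurd (hq.mem_of_pow_mem _ h') hcq
    · rcases hq.mem_or_mem h' with h'' | h''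
      · exact Or.inl ⟨g₁, h'', f₁.natDegree, rfl⟩
      · exact Or.inr ⟨g₂, h'', f₂.natDegree, rfl⟩

lemma satId_mono {q₁ q₂ : Ideal (reesAlgebra I)} (h : q₁ ≤ q₂) :
    satId hy q₁ ≤ satId hy q₂ := by
  rintro f ⟨g, hg, n, hn⟩
  exact ⟨g, h hg, n, hn⟩

lemma comap_satId {q : Ideal (reesAlgebra I)} (hq : q.IsPrime)
    (hcq : (⟨C y, C_mem_rees y⟩ : reesAlgebra I) ∉ q) :
    Ideal.comap (reesAlgebra I).val.toRingHom (satId hy q) = q := by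
  ext g
  rw [Ideal.mem_comap]
  exact coe_mem_satId_iff hy hq hcq g

lemma satId_comap {p : Ideal R[X]} (hp : p.IsPrime) (hcp : C y ∉ p) :
    satId hy (Ideal.comap (reesAlgebra I).val.toRingHom p) = p := by
  ext f
  constructor
  · rintro ⟨g, hg, n, hn⟩
    rw [Ideal.mem_comap] at hg
    have : C y ^ n * f ∈ p := by rw [hn]; exact hg
    rcases hp.mem_or_mem this with h' | h'
    · exact absurd (hp.mem_of_pow_mem _ h') hcp
    · exact h'
  · intro hf
    refine ⟨⟨C y ^ f.natDegree * f, pow_C_mul_mem_rees hy f le_rfl⟩, ?_, f.natDegree, rfl⟩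
    rw [Ideal.mem_comap]
    exact Ideal.mul_mem_left _ _ hf

end Sat

lemma height_iic_top {α : Type*} [Preorder α] (x : α) (hx : x ∈ Set.Iic x) :
    Order.height (⟨x, hx⟩ : Set.Iic x) = Order.height x := by
  apply le_antisymm
  · exact Order.height_le_height_apply_of_strictMono Subtype.val (fun a b h => h) _
  · apply Order.height_le
    intro p hp
    let q : LTSeries (Set.Iic x) :=
      ⟨p.length, fun i => ⟨p i, hp ▸ p.monotone (Fin.le_last i)⟩, fun i => p.step i⟩
    have hq : q.last = ⟨x, hx⟩ := Subtype.ext (by simpa [q, RelSeries.last] using hp)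
    have := Order.length_le_height_last (p := q)
    rw [hq] at this
    simpa [q] using this

/-- Let `R` be a normal Noetherian domain, `I` an ideal of height at least `2` whose Rees
algebra `𝓡 = reesAlgebra I` is normal, and `x ∈ I` nonzero.  If `P` is a height-one prime of
`𝓡` not containing `I𝓡`, then inside the quotient field of `R[T]` the localization `𝓡_P`
equals `R[T]_Q` for some height-one prime `Q` of `R[T]`; in particular it is a localization
of `R[T]`. -/
theorem rees_localization_away_from_IR
    {R : Type*} [CommRing R] [IsDomain R] [IsNoetherianRing R] [IsIntegrallyClosed R]
    (I : Ideal R)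
    (hht : 2 ≤ ⨅ (p : PrimeSpectrum R) (_ : I ≤ p.asIdeal), Order.height p)
    [IsIntegrallyClosed ↥(reesAlgebra I)]
    (x : R) (hxI : x ∈ I) (hx : x ≠ 0)
    (P : Ideal ↥(reesAlgebra I)) (hP : P.IsPrime)
    (hP1 : Order.height (⟨P, hP⟩ : PrimeSpectrum ↥(reesAlgebra I)) = 1)
    (hPI : ¬ Ideal.map (algebraMap R ↥(reesAlgebra I)) I ≤ P) :
    ∃ (Q : Ideal (Polynomial R)) (hQ : Q.IsPrime),
      Order.height (⟨Q, hQ⟩ : PrimeSpectrum (Polynomial R)) = 1 ∧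
      locSet ((algebraMap (Polynomial R) (FractionRing (Polynomial R))).comp
        (reesAlgebra I).val.toRingHom) P =
      locSet (algebraMap (Polynomial R) (FractionRing (Polynomial R))) Q := by
  classical
  obtain ⟨y, hy, hyP⟩ : ∃ y ∈ I, algebraMap R (reesAlgebra I) y ∉ P := by
    by_contra h
    push_neg at h
    exact hPI (Ideal.map_le_iff_le_comap.mpr fun y hy => Ideal.mem_comap.mpr (h y hy))
  have halg : algebraMap R (reesAlgebra I) y = ⟨C y, C_mem_rees y⟩ := by
    apply Subtype.ext
    simp [Polynomial.algebraMap_eq]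
  have hcP : (⟨C y, C_mem_rees y⟩ : reesAlgebra I) ∉ P := halg ▸ hyP
  set Q := satId hy P with hQdef
  have hQ : Q.IsPrime := satId_isPrime hy hP hcP
  have hcQ : C y ∉ Q := fun h => hcP ((coe_mem_satId_iff hy hP hcP _).mp h)
  refine ⟨Q, hQ, ?_, ?_⟩
  · -- the height computation via an order isomorphism of the sets of primes below
    have comap_le : ∀ p : Set.Iic (⟨Q, hQ⟩ : PrimeSpectrum R[X]),
        Ideal.comap (reesAlgebra I).val.toRingHom p.1.asIdeal ≤ P := by
      intro p
      have := Ideal.comap_mono (f := (reesAlgebra I).val.toRingHom) p.2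
      rwa [comap_satId hy hP hcP] at this
    have cA_notMem : ∀ q : Set.Iic (⟨P, hP⟩ : PrimeSpectrum (reesAlgebra I)),
        (⟨C y, C_mem_rees y⟩ : reesAlgebra I) ∉ q.1.asIdeal := fun q h => hcP (q.2 h)
    have cy_notMem : ∀ p : Set.Iic (⟨Q, hQ⟩ : PrimeSpectrum R[X]),
        C y ∉ p.1.asIdeal := fun p h => hcQ (p.2 h)
    let e : Set.Iic (⟨Q, hQ⟩ : PrimeSpectrum R[X]) ≃o
        Set.Iic (⟨P, hP⟩ : PrimeSpectrum (reesAlgebra I)) :=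
      { toFun := fun p => ⟨⟨Ideal.comap (reesAlgebra I).val.toRingHom p.1.asIdeal,
          Ideal.comap_isPrime _ _⟩, comap_le p⟩
        invFun := fun q => ⟨⟨satId hy q.1.asIdeal,
            satId_isPrime hy q.1.isPrime (cA_notMem q)⟩,
          satId_mono hy q.2⟩
        left_inv := fun p => by
          apply Subtype.ext
          apply PrimeSpectrum.ext
          exact satId_comap hy p.1.isPrime (cy_notMem p)
        right_inv := fun q => by
          apply Subtype.ext
          apply PrimeSpectrum.ext
          exact comap_satId hy q.1.isPrime (cA_notMem q)
        map_rel_iff' := by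
          intro p₁ p₂
          constructor
          · intro h
            have h2 := satId_mono hy (q₁ := Ideal.comap (reesAlgebra I).val.toRingHom p₁.1.asIdeal)
              (q₂ := Ideal.comap (reesAlgebra I).val.toRingHom p₂.1.asIdeal) h
            rwa [satId_comap hy p₁.1.isPrime (cy_notMem p₁),
              satId_comap hy p₂.1.isPrime (cy_notMem p₂)] at h2
          · intro h
            exact Ideal.comap_mono h }
    have htop : e ⟨⟨Q, hQ⟩, Set.self_mem_Iic⟩ = ⟨⟨P, hP⟩, Set.self_mem_Iic⟩ := by
      apply Subtype.ext
      apply PrimeSpectrum.ext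
      exact comap_satId hy hP hcP
    have := Order.height_orderIso e ⟨⟨Q, hQ⟩, Set.self_mem_Iic⟩
    rw [htop, height_iic_top _ _, height_iic_top _ _, hP1] at this
    exact this.symm
  · ext z
    constructor
    · rintro ⟨a', b', hb', hab⟩
      refine ⟨(a' : R[X]), (b' : R[X]),
        fun h => hb' ((coe_mem_satId_iff hy hP hcP b').mp h), ?_⟩
      simpa [RingHom.comp_apply] using hab
    · rintro ⟨f, g, hg, hz⟩
      refine ⟨⟨C y ^ max f.natDegree g.natDegree * f,
          pow_C_mul_mem_rees hy f (le_max_left _ _)⟩,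
        ⟨C y ^ max f.natDegree g.natDegree * g,
          pow_C_mul_mem_rees hy g (le_max_right _ _)⟩,
        fun h => hg ⟨_, h, max f.natDegree g.natDegree, rfl⟩, ?_⟩
      simp only [RingHom.comp_apply]
      show z * algebraMap _ _ (C y ^ max f.natDegree g.natDegree * g) =
        algebraMap _ _ (C y ^ max f.natDegree g.natDegree * f)
      rw [map_mul, map_mul, ← mul_assoc, mul_comm z, mul_assoc, hz]
end

section
/- Let R be a normal Noetherian domain and I an ideal of height at least 2 with normal Rees algebra 𝓡. Then 𝓡 equals the intersection of R[T] with the localizations 𝓡_{P_1}, …, 𝓡_{P_t}, where P_1, …, P_t are the minimal primes of I𝓡 of height one (all taken inside the quotient field of R[T]). -/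
open Polynomial

/-- In a Noetherian integrally closed domain, if `a ∉ (b)` with `b ≠ 0`, then the
"denominator ideal" `{c | c * a ∈ (b)}` is contained in a height-one prime. -/
lemma krull_height_one {A : Type*} [CommRing A] [IsDomain A] [IsNoetherianRing A]
    [IsIntegrallyClosed A] {a b : A} (hb : b ≠ 0) (ha : a ∉ Ideal.span {b}) :
    ∃ (Q : Ideal A) (hQ : Q.IsPrime),
      (∀ c : A, c * a ∈ Ideal.span {b} → c ∈ Q) ∧
      Order.height (⟨Q, hQ⟩ : PrimeSpectrum A) = 1 := by
  classical
  set B := Ideal.span {b} with hB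
  -- associated prime of A/(b) containing (b : a)
  have hx : (Ideal.Quotient.mk B a) ≠ 0 := by
    simpa [Ideal.Quotient.eq_zero_iff_mem] using ha
  obtain ⟨Q, hass, hle⟩ := exists_le_isAssociatedPrime_of_isNoetherianRing A
    (Ideal.Quotient.mk B a) hx
  obtain ⟨hQ, y, hy⟩ := (isAssociatedPrime_iff).mp hass
  obtain ⟨c, rfl⟩ := Ideal.Quotient.mk_surjective y
  -- membership description of Q
  have hQmem : ∀ z : A, z ∈ Q ↔ z * c ∈ B := by
    intro z
    rw [hy, Submodule.mem_colon_singleton, Submodule.mem_bot]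
    show Ideal.Quotient.mk B (z * c) = 0 ↔ _
    · rw [Ideal.Quotient.eq_zero_iff_mem]
  have hc : c ∉ B := by
    intro hcB
    have : (1 : A) ∈ Q := by rw [hQmem]; simpa using Ideal.mul_mem_left _ 1 hcB
    exact hQ.ne_top (Ideal.eq_top_iff_one _ |>.2 this)
  have hD : ∀ z : A, z * a ∈ B → z ∈ Q := by
    intro z hz
    apply hle
    rw [Submodule.mem_colon_singleton, Submodule.mem_bot]
    show Ideal.Quotient.mk B (z * a) = 0
    rwa [Ideal.Quotient.eq_zero_iff_mem]
  have hbQ : b ∈ Q := by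
    rw [hQmem]
    exact Ideal.mul_mem_right c _ (Ideal.mem_span_singleton_self b)
  refine ⟨Q, hQ, hD, ?_⟩
  -- key fraction y0 = c / b in the fraction field
  set K := FractionRing A
  have ginj : Function.Injective (algebraMap A K) := IsFractionRing.injective A K
  have hgb : algebraMap A K b ≠ 0 := fun h => hb (ginj (by simpa using h))
  set y0 : K := algebraMap A K c * (algebraMap A K b)⁻¹ with hy0
  have key : ∀ z ∈ Q, ∃ d : A, y0 * algebraMap A K z = algebraMap A K d := by
    intro z hz
    rw [hQmem] at hz
    obtain ⟨d, hd⟩ := Ideal.mem_span_singleton'.mp hz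
    refine ⟨d, ?_⟩
    have h2 : algebraMap A K (d * b) = algebraMap A K (z * c) := by rw [hd]
    rw [map_mul, map_mul] at h2
    rw [hy0]
    rw [mul_right_comm, ← div_eq_mul_inv, div_eq_iff hgb]
    linear_combination -h2
  have hy0n : ∀ d : A, y0 ≠ algebraMap A K d := by
    intro d hd
    apply hc
    have : algebraMap A K c = algebraMap A K (d * b) := by
      rw [map_mul, ← hd, hy0]
      rw [inv_mul_cancel_right₀ hgb]
    rw [hB, Ideal.mem_span_singleton']
    exact ⟨d, (ginj this).symm⟩
  -- find q₀ ∈ Q with y0 * q₀ = d₀ ∉ Q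
  have hq0 : ∃ q₀ ∈ Q, ∃ d₀ : A, d₀ ∉ Q ∧ y0 * algebraMap A K q₀ = algebraMap A K d₀ := by
    by_contra hcon
    push_neg at hcon
    -- determinant trick: y0 • Q ⊆ Q
    set N : Submodule A K := Submodule.map (Algebra.linearMap A K) Q with hN
    have hNbot : N ≠ ⊥ := by
      intro hbot
      have : algebraMap A K b ∈ N := ⟨b, hbQ, rfl⟩
      rw [hbot] at this
      exact hgb (by simpa using this)
    have hNfg : N.FG := (IsNoetherian.noetherian Q).map _
    have hsmul : ∀ n ∈ N, y0 • n ∈ N := by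
      rintro _ ⟨z, hz, rfl⟩
      obtain ⟨d, hd⟩ := key z hz
      have hdQ : d ∈ Q := by
        by_contra hdQ
        exact (hcon z hz d hdQ) hd
      exact ⟨d, hdQ, by simpa [smul_eq_mul] using hd.symm⟩
    have hint : IsIntegral A y0 := isIntegral_of_smul_mem_submodule N hNbot hNfg y0 hsmul
    obtain ⟨e, he⟩ := IsIntegrallyClosed.isIntegral_iff.mp hint
    exact hy0n e he.symm
  obtain ⟨q₀, hq₀Q, d₀, hd₀Q, hrel⟩ := hq0
  -- relation : for all z ∈ Q, z * d₀ = q₀ * (the d for z)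
  have hrel2 : ∀ z ∈ Q, ∃ d : A, z * d₀ = q₀ * d ∧ y0 * algebraMap A K z = algebraMap A K d := by
    intro z hz
    obtain ⟨d, hd⟩ := key z hz
    refine ⟨d, ?_, hd⟩
    apply ginj
    rw [map_mul, map_mul, ← hd, ← hrel]
    ring
  -- every prime strictly below Q is ⊥
  have hbelow : ∀ (J : Ideal A), J.IsPrime → J < Q → J = ⊥ := by
    intro J hJ hJQ
    have hq₀J : q₀ ∉ J := by
      intro hq₀J
      have : Q ≤ J := by
        intro z hz
        obtain ⟨d, hd, -⟩ := hrel2 z hz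
        have hz' : z * d₀ ∈ J := hd ▸ Ideal.mul_mem_right _ _ hq₀J
        rcases hJ.mem_or_mem hz' with h | h
        · exact h
        · exact absurd (hJQ.le h) hd₀Q
      exact absurd this (not_le_of_gt hJQ)
    have hchain : ∀ (n : ℕ), ∀ z ∈ J, ∃ w ∈ J, z * d₀ ^ n = q₀ ^ n * w := by
      intro n
      induction n with
      | zero => intro z hz; exact ⟨z, hz, by simp⟩
      | succ n ih =>
        intro z hz
        obtain ⟨w, hw, hwe⟩ := ih z hz
        obtain ⟨d, hd, -⟩ := hrel2 w (hJQ.le hw)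
        refine ⟨d, ?_, ?_⟩
        · have hmem : q₀ ^ (n + 1) * d ∈ J := by
            have heq : q₀ ^ (n + 1) * d = z * d₀ ^ (n + 1) := by
              linear_combination (-d₀) * hwe - q₀ ^ n * hd
            rw [heq]
            exact Ideal.mul_mem_right _ _ hz
          rcases hJ.mem_or_mem hmem with h | h
          · exact absurd (hJ.mem_of_pow_mem _ h) hq₀J
          · exact h
        · linear_combination d₀ * hwe + q₀ ^ n * hd
    -- localize at Q and use Krull intersection
    set L := Localization.AtPrime Q
    haveI : IsNoetherianRing L := IsLocalization.isNoetherianRing Q.primeCompl L ‹_›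
    have hmapne : Ideal.map (algebraMap A L) Q ≠ ⊤ := by
      rw [Localization.AtPrime.map_eq_maximalIdeal]
      exact (IsLocalRing.maximalIdeal.isMaximal L).ne_top
    have hbot := Ideal.iInf_pow_eq_bot_of_isDomain _ hmapne
    have hzero : ∀ z ∈ J, algebraMap A L z = 0 := by
      intro z hz
      rw [← Ideal.mem_bot, ← hbot, Ideal.mem_iInf]
      intro n
      obtain ⟨w, hw, hwe⟩ := hchain n z hz
      have hu : IsUnit (algebraMap A L d₀) := IsLocalization.map_units L (⟨d₀, hd₀Q⟩ : Q.primeCompl)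
      have : algebraMap A L z * (algebraMap A L d₀) ^ n
          = (algebraMap A L q₀) ^ n * algebraMap A L w := by
        rw [← map_pow, ← map_mul, hwe, map_mul, map_pow]
      have hinv2 : algebraMap A L d₀ * ((hu.unit⁻¹ : Lˣ) : L) = 1 := by
        have h4 := hu.unit.mul_inv
        rwa [IsUnit.unit_spec] at h4
      have hz' : algebraMap A L z =
          (algebraMap A L q₀) ^ n * algebraMap A L w * ((hu.unit⁻¹ : Lˣ) : L) ^ n := by
        calc algebraMap A L z
            = algebraMap A L z * ((algebraMap A L d₀ * ((hu.unit⁻¹ : Lˣ) : L)) ^ n) := by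
              rw [hinv2, one_pow, mul_one]
          _ = (algebraMap A L z * algebraMap A L d₀ ^ n) * ((hu.unit⁻¹ : Lˣ) : L) ^ n := by
              rw [mul_pow]; ring
          _ = (algebraMap A L q₀) ^ n * algebraMap A L w * ((hu.unit⁻¹ : Lˣ) : L) ^ n := by
              rw [this]
      rw [hz']
      exact Ideal.mul_mem_right _ _ (Ideal.mul_mem_right _ _
        (Ideal.pow_mem_pow (Ideal.mem_map_of_mem _ hq₀Q) n))
    ext z
    simp only [Ideal.mem_bot]
    constructor
    · intro hz
      have h0 := hzero z hz
      rw [IsLocalization.to_map_eq_zero_iff L Q.primeCompl_le_nonZeroDivisors] at h0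
      exact h0
    · rintro rfl; exact J.zero_mem
  -- conclude the height computation
  have hQne : Q ≠ ⊥ := by
    intro h
    rw [h] at hbQ
    exact hb (by simpa using hbQ)
  have hbotlt : (⟨⊥, Ideal.bot_prime⟩ : PrimeSpectrum A) < ⟨Q, hQ⟩ := by
    rw [← PrimeSpectrum.asIdeal_lt_asIdeal]
    exact lt_of_le_of_ne bot_le (Ne.symm hQne)
  have hally : ∀ y : PrimeSpectrum A, y < ⟨Q, hQ⟩ → y = ⟨⊥, Ideal.bot_prime⟩ := by
    intro y hy
    rw [← PrimeSpectrum.asIdeal_lt_asIdeal] at hy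
    have := hbelow y.asIdeal y.isPrime hy
    exact PrimeSpectrum.ext this
  have hbotmin : IsMin (⟨⊥, Ideal.bot_prime⟩ : PrimeSpectrum A) := by
    intro y hy
    rw [← PrimeSpectrum.asIdeal_le_asIdeal] at hy ⊢
    exact bot_le
  have h0 : Order.height (⟨⊥, Ideal.bot_prime⟩ : PrimeSpectrum A) = 0 :=
    Order.height_eq_zero.mpr hbotmin
  have h1 : Order.height (⟨Q, hQ⟩ : PrimeSpectrum A) ≤ (1 : ℕ) := by
    rw [Order.height_le_coe_iff]
    intro y hy
    rw [hally y hy, h0]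
    norm_num
  have : Order.height (⟨Q, hQ⟩ : PrimeSpectrum A) = ((0 : ℕ) : ℕ∞) + 1 := by
    rw [Order.height_eq_coe_add_one_iff]
    refine ⟨lt_of_le_of_lt h1 (WithTop.coe_lt_top 1), ⟨_, hbotlt, h0⟩, ?_⟩
    intro y hy
    rw [hally y hy, h0]
    exact_mod_cast le_refl 0
  simpa using this



lemma rees_helper_mem {R : Type*} [CommRing R] (I : Ideal R) {r : R} (hr : r ∈ I)
    (p : R[X]) : C r ^ p.natDegree * p ∈ reesAlgebra I := by
  rw [mem_reesAlgebra_iff]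
  intro k
  rw [← C_pow, coeff_C_mul]
  by_cases hk : k ≤ p.natDegree
  · exact Ideal.mul_mem_right _ _ (Ideal.pow_le_pow_right hk (Ideal.pow_mem_pow hr _))
  · push_neg at hk
    rw [coeff_eq_zero_of_natDegree_lt hk, mul_zero]
    exact zero_mem _

/-- Let `R` be a normal Noetherian domain and `I` an ideal of height at least `2` with
normal Rees algebra `𝓡`.  If `P 1, …, P t` are exactly the height-one primes of `𝓡`
containing `I𝓡`, then inside the quotient field `K` of `R[T]` one has
`𝓡 = R[T] ∩ 𝓡_{P 1} ∩ … ∩ 𝓡_{P t}`. -/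
theorem rees_algebra_eq_intersection
    {R : Type*} [CommRing R] [IsDomain R] [IsNoetherianRing R] [IsIntegrallyClosed R]
    (I : Ideal R)
    (hht : 2 ≤ ⨅ (p : PrimeSpectrum R) (_ : I ≤ p.asIdeal), Order.height p)
    [IsIntegrallyClosed ↥(reesAlgebra I)]
    (t : ℕ) (P : Fin t → Ideal ↥(reesAlgebra I)) (hP : ∀ i, (P i).IsPrime)
    (hP1 : ∀ i, Order.height (⟨P i, hP i⟩ : PrimeSpectrum ↥(reesAlgebra I)) = 1)
    (hPI : ∀ i, Ideal.map (algebraMap R ↥(reesAlgebra I)) I ≤ P i)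
    (hall : ∀ (Q : Ideal ↥(reesAlgebra I)) (hQ : Q.IsPrime),
      Order.height (⟨Q, hQ⟩ : PrimeSpectrum ↥(reesAlgebra I)) = 1 →
      Ideal.map (algebraMap R ↥(reesAlgebra I)) I ≤ Q → ∃ i, Q = P i) :
    Set.range ((algebraMap (Polynomial R) (FractionRing (Polynomial R))).comp
        (reesAlgebra I).val.toRingHom) =
      Set.range (algebraMap (Polynomial R) (FractionRing (Polynomial R))) ∩
        ⋂ i, locSet ((algebraMap (Polynomial R) (FractionRing (Polynomial R))).comp
          (reesAlgebra I).val.toRingHom) (P i) := by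
  classical
  have hinj : Function.Injective (algebraMap (Polynomial R) (FractionRing (Polynomial R))) :=
    IsFractionRing.injective _ _
  apply Set.Subset.antisymm
  · rintro x ⟨r, rfl⟩
    refine ⟨⟨r.val, rfl⟩, ?_⟩
    rw [Set.mem_iInter]
    intro i
    exact ⟨r, 1, fun h => (hP i).ne_top ((Ideal.eq_top_iff_one _).mpr h), by simp⟩
  · rintro x ⟨⟨p, hpeq⟩, hloc⟩
    rw [Set.mem_iInter] at hloc
    -- suffices to show p lies in the Rees algebra
    suffices hmem : p ∈ reesAlgebra I by exact ⟨⟨p, hmem⟩, hpeq⟩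
    by_contra hp
    -- I is nonzero
    have hI0 : I ≠ ⊥ := by
      rintro rfl
      have h2 := hht.trans (iInf_le _ ⟨⊥, Ideal.bot_prime⟩)
      have h3 := h2.trans (iInf_le _ bot_le)
      have h0 : Order.height (⟨⊥, Ideal.bot_prime⟩ : PrimeSpectrum R) = 0 := by
        rw [Order.height_eq_zero]
        intro y hy
        rw [← PrimeSpectrum.asIdeal_le_asIdeal] at hy ⊢
        exact bot_le
      rw [h0] at h3
      norm_num at h3
    obtain ⟨a₀, ha₀I, ha₀⟩ := (Submodule.ne_bot_iff I).mp hI0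
    set n := p.natDegree with hn
    have hCmem : C a₀ ^ n ∈ reesAlgebra I := by
      apply pow_mem
      rw [← Polynomial.algebraMap_eq]
      exact Subalgebra.algebraMap_mem _ _
    set bbA : ↥(reesAlgebra I) := ⟨C a₀ ^ n, hCmem⟩ with hbbA
    set aaA : ↥(reesAlgebra I) := ⟨C a₀ ^ n * p, rees_helper_mem I ha₀I p⟩ with haaA
    have hCne : (C a₀ : R[X]) ^ n ≠ 0 := pow_ne_zero _ (Polynomial.C_ne_zero.mpr ha₀)
    have hb0 : bbA ≠ 0 := by
      intro h
      exact hCne (congrArg Subtype.val h)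
    have hnotin : aaA ∉ Ideal.span {bbA} := by
      intro h
      obtain ⟨c, hc⟩ := Ideal.mem_span_singleton'.mp h
      have hval : (c : R[X]) * (C a₀ ^ n) = C a₀ ^ n * p := congrArg Subtype.val hc
      have : p = (c : R[X]) := by
        apply mul_left_cancel₀ hCne
        rw [← hval]; ring
      exact hp (this ▸ c.2)
    obtain ⟨Q, hQ, hD, hht1⟩ := krull_height_one hb0 hnotin
    by_cases hIQ : Ideal.map (algebraMap R ↥(reesAlgebra I)) I ≤ Q
    · obtain ⟨i, hQP⟩ := hall Q hQ hht1 hIQ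
      obtain ⟨ai, bi, hbi, heq⟩ := hloc i
      have hpb : p * (bi : R[X]) = (ai : R[X]) := by
        apply hinj
        rw [map_mul, hpeq]
        exact heq
      have hbiQ : bi ∈ Q := by
        apply hD
        rw [Ideal.mem_span_singleton']
        refine ⟨ai, Subtype.ext ?_⟩
        show (ai : R[X]) * (C a₀ ^ n) = (bi : R[X]) * (C a₀ ^ n * p)
        linear_combination (-(C a₀ ^ n : R[X])) * hpb
      rw [hQP] at hbiQ
      exact hbi hbiQ
    · rw [Ideal.map_le_iff_le_comap] at hIQ
      obtain ⟨r, hrI, hrQ⟩ := SetLike.not_le_iff_exists.mp hIQ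
      apply hrQ
      rw [Ideal.mem_comap]
      apply hQ.mem_of_pow_mem n
      apply hD
      rw [Ideal.mem_span_singleton']
      refine ⟨⟨C r ^ n * p, rees_helper_mem I hrI p⟩, Subtype.ext ?_⟩
      show (C r ^ n * p) * (C a₀ ^ n) =
        ((algebraMap R ↥(reesAlgebra I) r ^ n * aaA : ↥(reesAlgebra I)) : R[X])
      push_cast
      rw [Polynomial.algebraMap_eq]
      ring
end

section
/- Let R be a normal Noetherian domain, I an ideal of height ≥ 2 with normal Rees algebra 𝓡, and let P_1, …, P_t be the minimal primes of I𝓡 with associated Rees valuations v_1, …, v_t on the quotient field of R[T]. Setting d_i = −v_i(T) and J_i(j) = {x ∈ R : v_i(x) ≥ j}, one has I^k = ⋂_{i=1}^t J_i(k·d_i) for every k ≥ 0. -/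
open Polynomial

/-- The "denominator ideal" of an element `y` of a field `K` relative to a ring hom
`f : A →+* K`. -/
def denomIdeal {A K : Type*} [CommRing A] [Field K] (f : A →+* K) (y : K) : Ideal A where
  carrier := {c | ∃ a, y * f c = f a}
  add_mem' := by
    rintro c d ⟨a, ha⟩ ⟨b, hb⟩
    exact ⟨a + b, by rw [map_add, mul_add, ha, hb, map_add]⟩
  zero_mem' := ⟨0, by simp⟩
  smul_mem' := by
    rintro r c ⟨a, ha⟩
    exact ⟨r * a, by rw [smul_eq_mul, map_mul, mul_left_comm, ha, ← map_mul]⟩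

lemma mem_denomIdeal {A K : Type*} [CommRing A] [Field K] (f : A →+* K) (y : K) (c : A) :
    c ∈ denomIdeal f y ↔ ∃ a, y * f c = f a := Iff.rfl

/-- In a Noetherian local integrally closed domain `B` with fraction field `K` (via `g`), if
`z ∈ K` is not in `B` but `z·m ⊆ B` for the maximal ideal `m ≠ ⊥`, then every nonzero prime of
`B` is maximal. -/
theorem aux_local {B K : Type*} [CommRing B] [IsDomain B] [IsNoetherianRing B] [IsLocalRing B]
    [IsIntegrallyClosed B] [Field K] (g : B →+* K)
    (hinj : Function.Injective g)
    (hfrac : ∀ y : K, ∃ a b : B, b ≠ 0 ∧ y * g b = g a)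
    (z : K) (hz : ∀ a : B, g a ≠ z)
    (hm : ∀ c ∈ IsLocalRing.maximalIdeal B, ∃ a, z * g c = g a)
    (hmbot : IsLocalRing.maximalIdeal B ≠ ⊥) :
    ∀ (Q : Ideal B), Q.IsPrime → Q ≠ ⊥ → Q = IsLocalRing.maximalIdeal B := by
  letI : Algebra B K := g.toAlgebra
  have halg : (algebraMap B K) = g := rfl
  haveI : IsFractionRing B K := by
    refine (isLocalization_iff _ _).mpr ⟨?_, ?_, ?_⟩
    · rintro ⟨b, hb⟩
      have hb0 : b ≠ 0 := nonZeroDivisors.ne_zero hb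
      have : g b ≠ 0 := fun h => hb0 (hinj (by rw [h, map_zero]))
      exact this.isUnit
    · intro y
      obtain ⟨a, b, hb, h⟩ := hfrac y
      exact ⟨(a, ⟨b, mem_nonZeroDivisors_of_ne_zero hb⟩), h⟩
    · intro a b h
      exact ⟨1, by rw [hinj h]⟩
  -- show the maximal ideal is principal
  have hprinc : (IsLocalRing.maximalIdeal B).IsPrincipal := by
    by_cases hcase : ∀ c ∈ IsLocalRing.maximalIdeal B, ∃ a ∈ IsLocalRing.maximalIdeal B,
        z * g c = g a
    · -- z stabilizes m, so z is integral over B, contradiction with z ∉ B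
      exfalso
      set N : Submodule B K :=
        Submodule.map (Algebra.linearMap B K) (IsLocalRing.maximalIdeal B) with hN
      have hNbot : N ≠ ⊥ := by
        obtain ⟨c0, hc0, hc0ne⟩ := (Submodule.ne_bot_iff _).mp hmbot
        refine (Submodule.ne_bot_iff _).mpr ⟨g c0, ⟨c0, hc0, rfl⟩, ?_⟩
        exact fun h => hc0ne (hinj (by rw [h, map_zero]))
      have hNfg : N.FG :=
        (IsNoetherian.noetherian (IsLocalRing.maximalIdeal B)).map (Algebra.linearMap B K)
      have hint : IsIntegral B z := by
        refine isIntegral_of_smul_mem_submodule N hNbot hNfg z ?_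
        rintro n ⟨c, hc, rfl⟩
        obtain ⟨a, ha, hza⟩ := hcase c hc
        refine ⟨a, ha, ?_⟩
        simp only [Algebra.linearMap_apply, halg]
        rw [smul_eq_mul, hza]
      obtain ⟨w, hw⟩ := IsIntegrallyClosed.isIntegral_iff.mp hint
      exact hz w hw
    · push_neg at hcase
      obtain ⟨c, hc, hcall⟩ := hcase
      obtain ⟨a, ha⟩ := hm c hc
      have haU : IsUnit a := by
        by_contra hanu
        exact hcall a (IsLocalRing.mem_maximalIdeal a |>.mpr hanu) ha
      obtain ⟨u, rfl⟩ := haU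
      set e : B := (↑u⁻¹ : B) * c with he
      have heM : e ∈ IsLocalRing.maximalIdeal B := Ideal.mul_mem_left _ _ hc
      have hze : z * g e = 1 := by
        rw [he, map_mul, mul_left_comm, ha, ← map_mul, ← map_one g]
        congr 1
        exact u.inv_mul
      refine ⟨⟨e, le_antisymm ?_ ?_⟩⟩
      · intro d hd
        obtain ⟨a', ha'⟩ := hm d hd
        have : g d = g (a' * e) := by
          rw [map_mul, ← ha', mul_comm (z * g d) (g e), ← mul_assoc, mul_comm (g e) z, hze,
            one_mul]
        rw [Ideal.submodule_span_eq, Ideal.mem_span_singleton]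
        exact ⟨a', by rw [mul_comm]; exact hinj this⟩
      · rw [Ideal.submodule_span_eq, Ideal.span_le, Set.singleton_subset_iff]
        exact heM
  have htfae := tfae_of_isNoetherianRing_of_isLocalRing_of_isDomain (R := B)
  obtain ⟨-, h4⟩ := (htfae.out 4 3).mp hprinc
  exact fun Q hQ hQ0 => h4 Q hQ0 hQ

/-- Key lemma: an element of the fraction field of a Noetherian integrally closed domain that
lies in every localization at a height-one prime lies in the ring. -/
theorem key_lemma {A K : Type*} [CommRing A] [IsDomain A] [IsNoetherianRing A]
    [IsIntegrallyClosed A] [Field K] (f : A →+* K)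
    (hinj : Function.Injective f)
    (hfrac : ∀ y : K, ∃ a b : A, b ≠ 0 ∧ y * f b = f a)
    (y : K)
    (hy : ∀ (Q : Ideal A) (hQ : Q.IsPrime),
      Order.height (⟨Q, hQ⟩ : PrimeSpectrum A) = 1 → y ∈ locSet f Q) :
    ∃ a : A, f a = y := by
  by_contra hrange
  push_neg at hrange
  have hyne : ∀ a, f a ≠ y := fun a h => hrange a h
  -- maximal denominator ideal
  set 𝒮 : Set (Ideal A) :=
    {J | ∃ z : K, (∀ a, f a ≠ z) ∧ denomIdeal f y ≤ J ∧ J = denomIdeal f z} with h𝒮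
  obtain ⟨p, hpS, hpmax⟩ := (set_has_maximal_iff_noetherian.mpr
    (inferInstance : IsNoetherian A A)) 𝒮 ⟨denomIdeal f y, y, hyne, le_rfl, rfl⟩
  obtain ⟨z, hz, hyz, rfl⟩ := hpS
  -- the maximal denominator ideal is prime
  have hne_top : denomIdeal f z ≠ ⊤ := by
    intro h
    obtain ⟨a, ha⟩ := (mem_denomIdeal f z 1).mp (h ▸ Submodule.mem_top)
    rw [map_one, mul_one] at ha
    exact hz a ha.symm
  have hprime : (denomIdeal f z).IsPrime := by
    refine ⟨hne_top, ?_⟩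
    intro r s hrs
    rw [or_iff_not_imp_left]
    intro hr
    have hz' : ∀ a, f a ≠ z * f r := by
      intro a h
      exact hr ⟨a, h.symm⟩
    have hle : denomIdeal f z ≤ denomIdeal f (z * f r) := by
      rintro c ⟨a, ha⟩
      exact ⟨a * r, by rw [mul_right_comm, ha, ← map_mul]⟩
    have hs : s ∈ denomIdeal f (z * f r) := by
      obtain ⟨a, ha⟩ := hrs
      exact ⟨a, by rw [mul_assoc, ← map_mul, ha]⟩
    by_contra hsz
    have hlt : denomIdeal f z < denomIdeal f (z * f r) :=
      lt_of_le_of_ne hle (fun h => hsz (h ▸ hs))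
    exact hpmax _ ⟨z * f r, hz', le_trans hyz hle, rfl⟩ hlt
  have hz0 : z ≠ 0 := fun h => hz 0 (by rw [map_zero, h])
  obtain ⟨a1, b1, hb1, heq1⟩ := hfrac z
  have hb1p : b1 ∈ denomIdeal f z := ⟨a1, heq1⟩
  have hbot : denomIdeal f z ≠ ⊥ :=
    fun h => hb1 (by simpa [h] using hb1p)
  haveI hprime' : (denomIdeal f z).IsPrime := hprime
  -- localize at p
  set p := denomIdeal f z with hp
  set B := Localization.AtPrime p with hB
  haveI : IsNoetherianRing B :=
    IsLocalization.isNoetherianRing p.primeCompl B inferInstance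
  haveI : IsIntegrallyClosed B :=
    isIntegrallyClosed_of_isLocalization B p.primeCompl p.primeCompl_le_nonZeroDivisors
  have hfs : ∀ s : p.primeCompl, f s ≠ 0 := by
    rintro ⟨s, hs⟩ h
    have : s = 0 := hinj (by rw [h, map_zero])
    exact hs (this ▸ p.zero_mem)
  have hunit : ∀ s : p.primeCompl, IsUnit (f s) := fun s => (hfs s).isUnit
  set g : B →+* K := IsLocalization.lift (S := B) hunit with hg
  have hgalg : ∀ a : A, g (algebraMap A B a) = f a := fun a => IsLocalization.lift_eq hunit a
  have hmk : ∀ (c : A) (s : p.primeCompl), g (IsLocalization.mk' B c s) * f s = f c := by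
    intro c s
    have := congrArg g (IsLocalization.mk'_spec B c s)
    rwa [map_mul, hgalg, hgalg] at this
  have hainj : Function.Injective (algebraMap A B) :=
    IsLocalization.injective B p.primeCompl_le_nonZeroDivisors
  have ginj : Function.Injective g := by
    rw [injective_iff_map_eq_zero]
    intro β h0
    obtain ⟨⟨c, s⟩, rfl⟩ := IsLocalization.mk'_surjective p.primeCompl β
    have := hmk c s
    rw [h0, zero_mul] at this
    have hc : c = 0 := hinj (by rw [← this, map_zero])
    rw [hc]; exact IsLocalization.mk'_zero s
  have gfrac : ∀ y' : K, ∃ a b : B, b ≠ 0 ∧ y' * g b = g a := by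
    intro y'
    obtain ⟨a, b, hb, h⟩ := hfrac y'
    refine ⟨algebraMap A B a, algebraMap A B b, ?_, by rw [hgalg, hgalg]; exact h⟩
    intro h0
    exact hb (hainj (by rw [h0, map_zero]))
  have hzg : ∀ β : B, g β ≠ z := by
    intro β h
    obtain ⟨⟨c, s⟩, rfl⟩ := IsLocalization.mk'_surjective p.primeCompl β
    have := hmk c s
    rw [h] at this
    exact s.2 ⟨c, this⟩
  have hmg : ∀ β ∈ IsLocalRing.maximalIdeal B, ∃ γ, z * g β = g γ := by
    intro β hβ
    obtain ⟨⟨c, s⟩, rfl⟩ := IsLocalization.mk'_surjective p.primeCompl β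
    have hc : c ∈ p := (IsLocalization.AtPrime.mk'_mem_maximal_iff B p c s).mp hβ
    obtain ⟨a, ha⟩ := hc
    refine ⟨IsLocalization.mk' B a s, ?_⟩
    apply mul_right_cancel₀ (hfs s)
    rw [mul_assoc, hmk c s, hmk a s, ha]
  have hmbot : IsLocalRing.maximalIdeal B ≠ ⊥ := by
    refine (Submodule.ne_bot_iff _).mpr ⟨algebraMap A B b1, ?_, ?_⟩
    · exact (IsLocalization.AtPrime.to_map_mem_maximal_iff B p b1).mpr hb1p
    · exact fun h => hb1 (hainj (by rw [h, map_zero]))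
  have hQmax := aux_local g ginj gfrac z hzg hmg hmbot
  -- every prime strictly below p is ⊥
  have hlt : ∀ q : Ideal A, q.IsPrime → q < p → q = ⊥ := by
    intro q hq hqp
    by_contra hqbot
    have hdisj : Disjoint (p.primeCompl : Set A) (q : Set A) :=
      Set.disjoint_left.mpr (fun a hap haq => hap (hqp.le haq))
    have hqB := IsLocalization.isPrime_of_isPrime_disjoint p.primeCompl B q hq hdisj
    have hcomap : Ideal.comap (algebraMap A B) (Ideal.map (algebraMap A B) q) = q :=
      IsLocalization.under_map_of_isPrime_disjoint p.primeCompl B hq hdisj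
    have hne : Ideal.map (algebraMap A B) q ≠ ⊥ := by
      intro h
      apply hqbot
      rw [← hcomap, h]
      exact Ideal.comap_bot_of_injective _ hainj
    have hmax := hQmax _ hqB hne
    have hc2 : Ideal.comap (algebraMap A B) (IsLocalRing.maximalIdeal B) = p :=
      IsLocalization.AtPrime.comap_maximalIdeal B p
    have : q = p := by rw [← hcomap, hmax, hc2]
    exact hqp.ne this
  -- p has height one
  have hheight : Order.height (⟨p, hprime⟩ : PrimeSpectrum A) = 1 := by
    rw [Order.height_eq_iSup_lt_height]
    apply le_antisymm
    · refine iSup₂_le ?_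
      intro q hq
      have hqb : q.asIdeal = ⊥ :=
        hlt q.asIdeal q.isPrime ((PrimeSpectrum.asIdeal_lt_asIdeal _ _).mpr hq)
      have hqmin : IsMin q := by
        intro w hw
        show (⟨q.asIdeal, q.isPrime⟩ : PrimeSpectrum A) ≤ w
        rw [← PrimeSpectrum.asIdeal_le_asIdeal]
        rw [hqb]
        exact bot_le
      rw [Order.height_eq_zero.mpr hqmin, zero_add]
    · have hbotlt : (⟨⊥, Ideal.bot_prime⟩ : PrimeSpectrum A) < ⟨p, hprime⟩ := by
        rw [← PrimeSpectrum.asIdeal_lt_asIdeal]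
        exact bot_lt_iff_ne_bot.mpr hbot
      calc (1 : ℕ∞) ≤ Order.height (⟨⊥, Ideal.bot_prime⟩ : PrimeSpectrum A) + 1 := le_add_self
      _ ≤ ⨆ y < (⟨p, hprime⟩ : PrimeSpectrum A), Order.height y + 1 :=
          le_iSup₂ (f := fun y (_ : y < (⟨p, hprime⟩ : PrimeSpectrum A)) =>
            Order.height y + 1) _ hbotlt
  obtain ⟨a, b, hbp, hab⟩ := hy p hprime hheight
  exact hbp (hyz ⟨a, hab⟩)

/-- Let `R` be a normal Noetherian domain, `I` an ideal of height `≥ 2` with normal Rees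
algebra `𝓡`, and let `P 1, …, P t` be exactly the height-one primes of `𝓡` containing
`I𝓡`, with associated (normalized) Rees valuations `v i` on the quotient field of `R[T]`,
i.e. the discrete valuations whose valuation ring is `𝓡_{P i}`.  With `d i = -(v i T)` and
`J_i(j) = {x ∈ R : v i x ≥ j}` one has `I ^ k = ⋂ i, J_i (k * d i)` for all `k`. -/
theorem powers_eq_intersection_of_valuation_ideals
    {R : Type*} [CommRing R] [IsDomain R] [IsNoetherianRing R] [IsIntegrallyClosed R]
    (I : Ideal R)
    (hht : 2 ≤ ⨅ (p : PrimeSpectrum R) (_ : I ≤ p.asIdeal), Order.height p)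
    [IsIntegrallyClosed ↥(reesAlgebra I)]
    (t : ℕ) (P : Fin t → Ideal ↥(reesAlgebra I)) (hP : ∀ i, (P i).IsPrime)
    (hP1 : ∀ i, Order.height (⟨P i, hP i⟩ : PrimeSpectrum ↥(reesAlgebra I)) = 1)
    (hPI : ∀ i, Ideal.map (algebraMap R ↥(reesAlgebra I)) I ≤ P i)
    (hall : ∀ (Q : Ideal ↥(reesAlgebra I)) (hQ : Q.IsPrime),
      Order.height (⟨Q, hQ⟩ : PrimeSpectrum ↥(reesAlgebra I)) = 1 →
      Ideal.map (algebraMap R ↥(reesAlgebra I)) I ≤ Q → ∃ i, Q = P i)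
    (v : Fin t → FractionRing (Polynomial R) → ℤ)
    (hvmul : ∀ i, ∀ x y : FractionRing (Polynomial R), x ≠ 0 → y ≠ 0 →
      v i (x * y) = v i x + v i y)
    (hvadd : ∀ i, ∀ x y : FractionRing (Polynomial R), x ≠ 0 → y ≠ 0 → x + y ≠ 0 →
      min (v i x) (v i y) ≤ v i (x + y))
    (hvsurj : ∀ i, ∀ z : ℤ, ∃ x : FractionRing (Polynomial R), x ≠ 0 ∧ v i x = z)
    (hvring : ∀ i, {x : FractionRing (Polynomial R) | x ≠ 0 ∧ 0 ≤ v i x} =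
      locSet ((algebraMap (Polynomial R) (FractionRing (Polynomial R))).comp
        (reesAlgebra I).val.toRingHom) (P i) \ {0}) :
    ∀ (k : ℕ) (x : R), x ∈ I ^ k ↔ (x = 0 ∨ ∀ i,
      (k : ℤ) * (-(v i (algebraMap (Polynomial R) (FractionRing (Polynomial R)) X))) ≤
        v i (algebraMap (Polynomial R) (FractionRing (Polynomial R)) (C x))) := by
  set algK := algebraMap (Polynomial R) (FractionRing (Polynomial R)) with halgK
  set f : ↥(reesAlgebra I) →+* FractionRing (Polynomial R) :=
    (algebraMap (Polynomial R) (FractionRing (Polynomial R))).comp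
      (reesAlgebra I).val.toRingHom with hf
  have hinjK : Function.Injective algK := IsFractionRing.injective (Polynomial R) (FractionRing (Polynomial R))
  have hinj : Function.Injective f := hinjK.comp Subtype.val_injective
  have hfval : ∀ a : ↥(reesAlgebra I), f a = algK (a : Polynomial R) := fun _ => rfl
  -- I contains a nonzero element
  have hIne : ∃ a0 ∈ I, a0 ≠ (0 : R) := by
    by_contra h
    push_neg at h
    have hIbot : I ≤ (⊥ : Ideal R) := fun a ha => (Submodule.mem_bot R).mpr (h a ha)
    have h2 : (2 : ℕ∞) ≤ Order.height (⟨⊥, Ideal.bot_prime⟩ : PrimeSpectrum R) :=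
      le_trans hht (le_trans (iInf_le _ ⟨⊥, Ideal.bot_prime⟩) (iInf_le _ hIbot))
    have hmin : IsMin (⟨⊥, Ideal.bot_prime⟩ : PrimeSpectrum R) := by
      intro w hw
      rw [← PrimeSpectrum.asIdeal_le_asIdeal]
      exact bot_le
    rw [Order.height_eq_zero.mpr hmin] at h2
    simp at h2
  obtain ⟨a0, ha0I, ha0ne⟩ := hIne
  -- multiplying by a power of `C a0` lands in the Rees algebra
  have hmm : ∀ (q : Polynomial R) (n : ℕ), q.natDegree ≤ n →
      C a0 ^ n * q ∈ reesAlgebra I := by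
    intro q n hn
    rw [mem_reesAlgebra_iff]
    intro i
    rw [← map_pow, coeff_C_mul]
    by_cases hi : i ≤ n
    · exact Ideal.pow_le_pow_right hi
        (Ideal.mul_mem_right _ _ (Ideal.pow_mem_pow ha0I n))
    · push_neg at hi
      rw [coeff_eq_zero_of_natDegree_lt (lt_of_le_of_lt hn hi), mul_zero]
      exact zero_mem _
  have hfrac : ∀ y : FractionRing (Polynomial R), ∃ a b : ↥(reesAlgebra I), b ≠ 0 ∧ y * f b = f a := by
    intro y
    obtain ⟨⟨pnum, s⟩, hy⟩ := IsLocalization.surj (nonZeroDivisors (Polynomial R)) y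
    refine ⟨⟨C a0 ^ (max pnum.natDegree (s : Polynomial R).natDegree) * pnum,
        hmm _ _ (le_max_left _ _)⟩,
      ⟨C a0 ^ (max pnum.natDegree (s : Polynomial R).natDegree) * (s : Polynomial R),
        hmm _ _ (le_max_right _ _)⟩, ?_, ?_⟩
    · intro h0
      have : C a0 ^ (max pnum.natDegree (s : Polynomial R).natDegree) * (s : Polynomial R)
          = 0 := congrArg Subtype.val h0
      exact (mul_ne_zero (pow_ne_zero _ (Polynomial.C_ne_zero.mpr ha0ne))
        (nonZeroDivisors.ne_zero s.2)) this
    · rw [hfval, hfval]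
      show y * algK (_ * _) = algK (_ * _)
      rw [map_mul, map_mul, mul_left_comm, hy]
  -- nonvanishing facts
  have hXne : algK X ≠ 0 := fun h => Polynomial.X_ne_zero (hinjK (by rw [h, map_zero]))
  have hCne : ∀ x : R, x ≠ 0 → algK (C x) ≠ 0 := fun x hx h =>
    (Polynomial.C_ne_zero.mpr hx) (hinjK (by rw [h, map_zero]))
  -- valuation of monomials
  have hvmon : ∀ i (x : R), x ≠ 0 → ∀ k : ℕ,
      v i (algK (C x * X ^ k)) = v i (algK (C x)) + (k : ℤ) * v i (algK X) := by
    intro i x hx k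
    induction k with
    | zero => simp
    | succ k ih =>
      have h1 : algK (C x * X ^ (k + 1)) = algK (C x * X ^ k) * algK X := by
        rw [← map_mul]
        congr 1
        ring
      have h2 : algK (C x * X ^ k) ≠ 0 := fun h =>
        (mul_ne_zero (Polynomial.C_ne_zero.mpr hx) (pow_ne_zero _ Polynomial.X_ne_zero))
          (hinjK (by rw [h, map_zero]))
      rw [h1, hvmul i _ _ h2 hXne, ih]
      push_cast
      ring
  intro k x
  constructor
  · -- easy direction
    intro hxk
    by_cases hx0 : x = 0
    · exact Or.inl hx0
    refine Or.inr fun i => ?_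
    have hmem : monomial k x ∈ reesAlgebra I := reesAlgebra.monomial_mem.mpr hxk
    set y := f ⟨monomial k x, hmem⟩ with hy
    have hyloc : y ∈ locSet f (P i) :=
      ⟨⟨monomial k x, hmem⟩, 1, fun h1 => (hP i).ne_top ((Ideal.eq_top_iff_one _).mpr h1),
        by rw [map_one, mul_one]⟩
    have hyne : y ≠ 0 := by
      rw [hy]
      intro h
      have h2 : (⟨monomial k x, hmem⟩ : ↥(reesAlgebra I)) = 0 := hinj (by rw [h, map_zero])
      have h3 : monomial k x = 0 := congrArg Subtype.val h2
      exact hx0 ((Polynomial.monomial_eq_zero_iff x k).mp h3)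
    have hmemset : y ∈ {w : FractionRing (Polynomial R) | w ≠ 0 ∧ 0 ≤ v i w} := by
      rw [hvring i]
      exact ⟨hyloc, hyne⟩
    have hyval : y = algK (C x * X ^ k) := by
      rw [hy, hfval]
      congr 1
      exact (C_mul_X_pow_eq_monomial).symm
    have h0le : 0 ≤ v i (algK (C x)) + (k : ℤ) * v i (algK X) := by
      rw [← hvmon i x hx0 k, ← hyval]
      exact hmemset.2
    linarith
  · -- hard direction
    intro h
    by_cases hx0 : x = 0
    · rw [hx0]; exact zero_mem _
    rcases h with h | hv
    · exact absurd h hx0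
    have hy : ∀ (Q : Ideal ↥(reesAlgebra I)) (hQ : Q.IsPrime),
        Order.height (⟨Q, hQ⟩ : PrimeSpectrum ↥(reesAlgebra I)) = 1 →
        algK (monomial k x) ∈ locSet f Q := by
      intro Q hQ hht1
      by_cases hIQ : Ideal.map (algebraMap R ↥(reesAlgebra I)) I ≤ Q
      · obtain ⟨i, rfl⟩ := hall Q hQ hht1 hIQ
        have hne : algK (monomial k x) ≠ 0 := fun h =>
          hx0 ((Polynomial.monomial_eq_zero_iff x k).mp (hinjK (by rw [h, map_zero])))
        have h0le : 0 ≤ v i (algK (monomial k x)) := by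
          rw [← C_mul_X_pow_eq_monomial, hvmon i x hx0 k]
          have := hv i
          linarith
        have hmemset : algK (monomial k x) ∈ {w : FractionRing (Polynomial R) | w ≠ 0 ∧ 0 ≤ v i w} := ⟨hne, h0le⟩
        rw [hvring i] at hmemset
        exact hmemset.1
      · obtain ⟨b0, hb0I, hb0Q⟩ := SetLike.not_le_iff_exists.mp
          (fun hle => hIQ (Ideal.map_le_iff_le_comap.mpr hle))
        refine ⟨⟨monomial k (x * b0 ^ k),
            reesAlgebra.monomial_mem.mpr (Ideal.mul_mem_left _ x (Ideal.pow_mem_pow hb0I k))⟩,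
          (algebraMap R ↥(reesAlgebra I) b0) ^ k, ?_, ?_⟩
        · intro hpow
          exact hb0Q (Ideal.mem_comap.mpr (hQ.mem_of_pow_mem k hpow))
        · have hb0val : ((algebraMap R ↥(reesAlgebra I) b0 : ↥(reesAlgebra I)) : Polynomial R)
              = C b0 := rfl
          have h1 : f (algebraMap R ↥(reesAlgebra I) b0) = algK (C b0) := by
            rw [hfval, hb0val]
          have hpoly : monomial k (x * b0 ^ k) = monomial k x * C b0 ^ k := by
            rw [← C_mul_X_pow_eq_monomial, ← C_mul_X_pow_eq_monomial, map_mul, map_pow]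
            ring
          rw [map_pow, h1, ← map_pow, hfval]
          show algK (monomial k x) * algK (C b0 ^ k) = algK (monomial k (x * b0 ^ k))
          rw [← map_mul, hpoly]
    obtain ⟨a, hfa⟩ := key_lemma f hinj hfrac (algK (monomial k x)) hy
    have hval : (a : Polynomial R) = monomial k x := hinjK (by rw [← hfval, hfa])
    exact reesAlgebra.monomial_mem.mp (hval ▸ a.2)
end

section
/- Let K be a field with char K = 0 or char K > min(t, m−t, n−t), X an m×n matrix of indeterminates over K, R = K[X], and I_t the ideal generated by the t-minors of X with 1 ≤ t < min(m,n). Consider the element 𝒟 ∈ R, the product of all minors of X whose main diagonals are the maximal parallels to the main diagonal (one starting at each X_{i1} and each X_{1j}). Then for each j with 1 ≤ j ≤ t, the value of the j-th determinantal valuation γ_j on 𝒟 equals ht I_j = (m−j+1)(n−j+1). -/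
open MvPolynomial

open MvPolynomial

lemma minor_ne_zero {K : Type*} [Field K] {m n s : ℕ}
    (r : Fin s → Fin m) (c : Fin s → Fin n)
    (hr : Function.Injective r) (hc : Function.Injective c) :
    Matrix.det (Matrix.of fun a b : Fin s =>
      (X (r a, c b) : MvPolynomial (Fin m × Fin n) K)) ≠ 0 := by
  classical
  intro h
  have h2 := congrArg (aeval (fun p : Fin m × Fin n =>
      if ∃ a, r a = p.1 ∧ c a = p.2 then (1 : K) else 0)) h
  rw [map_zero, AlgHom.map_det, AlgHom.mapMatrix_apply] at h2
  have he : ((Matrix.of fun a b : Fin s =>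
      (X (r a, c b) : MvPolynomial (Fin m × Fin n) K)).map
        (aeval (fun p : Fin m × Fin n =>
          if ∃ a, r a = p.1 ∧ c a = p.2 then (1 : K) else 0))) = 1 := by
    ext a b
    simp only [Matrix.map_apply, Matrix.of_apply, aeval_X, Matrix.one_apply]
    by_cases hab : a = b
    · subst hab
      rw [if_pos ⟨a, rfl, rfl⟩, if_pos rfl]
    · rw [if_neg, if_neg hab]
      rintro ⟨a', ha1, ha2⟩
      exact hab ((hr ha1) ▸ (hc ha2) ▸ rfl)
  rw [he, Matrix.det_one] at h2
  exact one_ne_zero h2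

lemma gamma_prod {K : Type*} [Field K] {σ : Type*}
    (γ : MvPolynomial σ K → ℤ)
    (hγmul : ∀ f g : MvPolynomial σ K, f ≠ 0 → g ≠ 0 → γ (f * g) = γ f + γ g)
    {ι : Type*} (s : Finset ι) (f : ι → MvPolynomial σ K)
    (hf : ∀ i ∈ s, f i ≠ 0) :
    γ (∏ i ∈ s, f i) = ∑ i ∈ s, γ (f i) := by
  classical
  revert hf
  induction s using Finset.induction_on with
  | empty =>
    intro _
    simp only [Finset.prod_empty, Finset.sum_empty]
    have h1 := hγmul 1 1 one_ne_zero one_ne_zero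
    simp only [mul_one] at h1
    omega
  | @insert a s' ha ih =>
    intro hf
    rw [Finset.prod_insert ha, Finset.sum_insert ha,
      hγmul _ _ (hf a (Finset.mem_insert_self a s'))
        (Finset.prod_ne_zero_iff.mpr fun i hi => hf i (Finset.mem_insert_of_mem hi)),
      ih fun i hi => hf i (Finset.mem_insert_of_mem hi)]

lemma L1 (n j : ℕ) (hj : 1 ≤ j) (hjn : j ≤ n) (M : ℕ) :
    2 * ∑ s ∈ Finset.range M, (min (s + 1) n + 1 - j) =
      (min M n + 1 - j) * (min M n + 2 - j) + 2 * (M - min M n) * (n + 1 - j) := by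
  induction M with
  | zero =>
    have h1 : 1 - j = 0 := by omega
    simp [h1]
  | succ M ih =>
    rw [Finset.sum_range_succ, Nat.mul_add]
    rcases le_or_gt (M + 1) n with h | h
    · rw [min_eq_left h] at *
      rw [min_eq_left (by omega : M ≤ n)] at ih
      rcases le_or_gt j (M + 1) with hjM | hjM
      · zify [show j ≤ M + 1 by omega, show j ≤ M + 2 by omega,
          show j ≤ M + 1 + 1 by omega, show j ≤ M + 1 + 2 by omega,
          show j ≤ n + 1 by omega, Nat.sub_self, le_refl] at ih ⊢
        linear_combination ih
      · have e1 : M + 1 - j = 0 := by omega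
        have e2 : M + 1 + 1 - j = 0 := by omega
        simp only [e1, e2, Nat.zero_mul, Nat.sub_self, Nat.mul_zero, Nat.zero_add,
          Nat.add_zero] at ih ⊢
        omega
    · rw [min_eq_right (by omega : n ≤ M + 1), min_eq_right (by omega : n ≤ M)] at *
      zify [show j ≤ n + 1 by omega, show j ≤ n + 2 by omega,
        show n ≤ M by omega, show n ≤ M + 1 by omega] at ih ⊢
      linear_combination ih

lemma key_sum (m n j : ℕ) (hj : 1 ≤ j) (hjm : j < m) (hjn : j < n) :
    (∑ i ∈ Finset.range m, (min (m - i) n + 1 - j)) +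
      (∑ l ∈ Finset.range (n - 1), (min m (n - (l + 1)) + 1 - j)) =
    (m + 1 - j) * (n + 1 - j) := by
  have r1 : ∑ i ∈ Finset.range m, (min (m - i) n + 1 - j)
      = ∑ i ∈ Finset.range m, (min (i + 1) n + 1 - j) := by
    rw [← Finset.sum_range_reflect]
    refine Finset.sum_congr rfl fun i hi => ?_
    have := Finset.mem_range.mp hi
    congr 2
    omega
  have r2 : ∑ l ∈ Finset.range (n - 1), (min m (n - (l + 1)) + 1 - j)
      = ∑ l ∈ Finset.range (n - 1), (min (l + 1) m + 1 - j) := by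
    rw [← Finset.sum_range_reflect]
    refine Finset.sum_congr rfl fun l hl => ?_
    have := Finset.mem_range.mp hl
    rw [Nat.min_comm]
    congr 2
    omega
  rw [r1, r2]
  have L := L1 n j hj (by omega) m
  have L' := L1 m j hj (by omega) (n - 1)
  refine Nat.eq_of_mul_eq_mul_left (show 0 < 2 by norm_num) ?_
  rcases le_or_gt m (n - 1) with h | h
  · rw [min_eq_left (by omega : m ≤ n)] at L
    rw [min_eq_right h] at L'
    zify [show j ≤ m + 1 by omega, show j ≤ m + 2 by omega, show j ≤ n + 1 by omega,
      Nat.sub_self, show m ≤ n - 1 by omega, show (1:ℕ) ≤ n by omega] at L L' ⊢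
    linear_combination L + L'
  · rw [min_eq_right (by omega : n ≤ m)] at L
    rw [min_eq_left (by omega : n - 1 ≤ m)] at L'
    zify [show j ≤ n + 1 by omega, show j ≤ n + 2 by omega, show j ≤ m + 1 by omega,
      show j ≤ n - 1 + 1 by omega, show j ≤ n - 1 + 2 by omega,
      show n ≤ m by omega, Nat.sub_self, show (1:ℕ) ≤ n by omega] at L L' ⊢
    linear_combination L + L'

set_option maxHeartbeats 1000000 in
/-- Let `X` be the generic `m × n` matrix over a field `K` of non-exceptional
characteristic, `1 ≤ j ≤ t < min m n`, and let `γ` be the `j`-th determinantal valuation: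
`γ` is additive on products of nonzero polynomials and takes the value `i - j + 1` on any
`i`-minor with `i ≥ j` and `0` on smaller minors.  Let `𝒟` be the product of all minors of
`X` whose main diagonals are the maximal parallels to the main diagonal (one starting at
each entry `X i 0` and each entry `X 0 l`, `l ≥ 1`).  Then `γ 𝒟 = ht I_j =
(m - j + 1) * (n - j + 1)`. -/
theorem gamma_of_product_of_diagonal_minors
    {K : Type*} [Field K] (m n t j : ℕ) (hj : 1 ≤ j) (hjt : j ≤ t) (ht : t < min m n)
    (hchar : ringChar K = 0 ∨ min t (min (m - t) (n - t)) < ringChar K)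
    (γ : MvPolynomial (Fin m × Fin n) K → ℤ)
    (hγmul : ∀ f g : MvPolynomial (Fin m × Fin n) K, f ≠ 0 → g ≠ 0 →
      γ (f * g) = γ f + γ g)
    (hγminor : ∀ (s : ℕ) (r : Fin s → Fin m) (c : Fin s → Fin n),
      StrictMono r → StrictMono c →
      γ (Matrix.det (Matrix.of fun a b : Fin s => (X (r a, c b) : MvPolynomial (Fin m × Fin n) K))) =
        if j ≤ s then (s : ℤ) - j + 1 else 0) :
    γ ((∏ i : Fin m, Matrix.det (Matrix.of
        fun a b : Fin (min (m - (i : ℕ)) n) =>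
          (X (⟨(i : ℕ) + (a : ℕ), by have := a.isLt; have := i.isLt; omega⟩,
              ⟨(b : ℕ), by have := b.isLt; omega⟩) : MvPolynomial (Fin m × Fin n) K))) *
      ∏ l : Fin (n - 1), Matrix.det (Matrix.of
        fun a b : Fin (min m (n - ((l : ℕ) + 1))) =>
          (X (⟨(a : ℕ), by have := a.isLt; omega⟩,
              ⟨((l : ℕ) + 1) + (b : ℕ), by have := b.isLt; have := l.isLt; omega⟩) :
            MvPolynomial (Fin m × Fin n) K))) =
      ((m : ℤ) - j + 1) * ((n : ℤ) - j + 1) := by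
  have hjm : j < m := by omega
  have hjn : j < n := by omega
  have key1 : ∀ i : Fin m,
      γ (Matrix.det (Matrix.of
        fun a b : Fin (min (m - (i : ℕ)) n) =>
          (X (⟨(i : ℕ) + (a : ℕ), by have := a.isLt; have := i.isLt; omega⟩,
              ⟨(b : ℕ), by have := b.isLt; omega⟩) : MvPolynomial (Fin m × Fin n) K))) =
        ((min (m - (i : ℕ)) n + 1 - j : ℕ) : ℤ) ∧
      (Matrix.det (Matrix.of
        fun a b : Fin (min (m - (i : ℕ)) n) =>
          (X (⟨(i : ℕ) + (a : ℕ), by have := a.isLt; have := i.isLt; omega⟩,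
              ⟨(b : ℕ), by have := b.isLt; omega⟩) : MvPolynomial (Fin m × Fin n) K))) ≠ 0 := by
    intro i
    have hrs : StrictMono (fun a : Fin (min (m - (i : ℕ)) n) =>
        (⟨(i : ℕ) + (a : ℕ), by have := a.isLt; have := i.isLt; omega⟩ : Fin m)) := by
      intro a b hab
      simp only [Fin.lt_def] at hab ⊢
      omega
    have hcs : StrictMono (fun b : Fin (min (m - (i : ℕ)) n) =>
        (⟨(b : ℕ), by have := b.isLt; omega⟩ : Fin n)) := by
      intro a b hab
      simp only [Fin.lt_def] at hab ⊢
      omega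
    constructor
    · refine (hγminor (min (m - (i : ℕ)) n) _ _ hrs hcs).trans ?_
      split_ifs with h <;> omega
    · exact minor_ne_zero _ _ hrs.injective hcs.injective
  have key2 : ∀ l : Fin (n - 1),
      γ (Matrix.det (Matrix.of
        fun a b : Fin (min m (n - ((l : ℕ) + 1))) =>
          (X (⟨(a : ℕ), by have := a.isLt; omega⟩,
              ⟨((l : ℕ) + 1) + (b : ℕ), by have := b.isLt; have := l.isLt; omega⟩) :
            MvPolynomial (Fin m × Fin n) K))) =
        ((min m (n - ((l : ℕ) + 1)) + 1 - j : ℕ) : ℤ) ∧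
      (Matrix.det (Matrix.of
        fun a b : Fin (min m (n - ((l : ℕ) + 1))) =>
          (X (⟨(a : ℕ), by have := a.isLt; omega⟩,
              ⟨((l : ℕ) + 1) + (b : ℕ), by have := b.isLt; have := l.isLt; omega⟩) :
            MvPolynomial (Fin m × Fin n) K))) ≠ 0 := by
    intro l
    have hrs : StrictMono (fun a : Fin (min m (n - ((l : ℕ) + 1))) =>
        (⟨(a : ℕ), by have := a.isLt; omega⟩ : Fin m)) := by
      intro a b hab
      simp only [Fin.lt_def] at hab ⊢
      omega
    have hcs : StrictMono (fun b : Fin (min m (n - ((l : ℕ) + 1))) =>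
        (⟨((l : ℕ) + 1) + (b : ℕ), by have := b.isLt; have := l.isLt; omega⟩ : Fin n)) := by
      intro a b hab
      simp only [Fin.lt_def] at hab ⊢
      omega
    constructor
    · refine (hγminor (min m (n - ((l : ℕ) + 1))) _ _ hrs hcs).trans ?_
      split_ifs with h <;> omega
    · exact minor_ne_zero _ _ hrs.injective hcs.injective
  rw [hγmul _ _ (Finset.prod_ne_zero_iff.mpr fun i _ => (key1 i).2)
        (Finset.prod_ne_zero_iff.mpr fun l _ => (key2 l).2),
      gamma_prod γ hγmul _ _ (fun i _ => (key1 i).2),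
      gamma_prod γ hγmul _ _ (fun l _ => (key2 l).2)]
  have e1 := Finset.sum_congr rfl (fun i (_ : i ∈ Finset.univ) => (key1 i).1)
  have e2 := Finset.sum_congr rfl (fun l (_ : l ∈ Finset.univ) => (key2 l).1)
  rw [e1, e2, ← Nat.cast_sum, ← Nat.cast_sum,
      Fin.sum_univ_eq_sum_range (fun i => min (m - i) n + 1 - j) m,
      Fin.sum_univ_eq_sum_range (fun l => min m (n - (l + 1)) + 1 - j) (n - 1)]
  have key := key_sum m n j hj hjm hjn
  rw [show ((m : ℤ) - j + 1) = ((m + 1 - j : ℕ) : ℤ) by omega,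
      show ((n : ℤ) - j + 1) = ((n + 1 - j : ℕ) : ℤ) by omega,
      ← Nat.cast_mul, ← key]
  push_cast
  ring
end
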